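/- arXiv:1205.0669 — 5 statements merged into one kernel-verified Lean document; each statement's English description precedes it below -/
import Mathlib

section
/- In the setup below, let w ≠ 0 be a weight of O_x and n ∈ ℤ. Then w + mn is also a weight of O_x, and A_{w+mn} = tⁿ·A_w (the image of A_w under multiplication by tⁿ in the R-module A). -/
/-!
Multiplication by `t = sᵐ` raises the `s`-degree by `m`, and `ad d` is the `s`-degree, so on
`L(𝔤,σ)` we get `ad d ∘ tⁿ = tⁿ ∘ (ad d + mn)`; this is checked on the spanning elements
`y ⊗ sᵖ` and extends by linearity. Since `A` is an `R`-Lie algebra, `ad x'` commutes with `tⁿ`,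
and the bracket of `L̂(𝔤,σ)` agrees with that of `L(𝔤,σ)` modulo `k c`. Hence `tⁿ` maps `A_w`
into `A_{w+mn}`, and `t⁻ⁿ` maps it back.
-/

open LaurentPolynomial TensorProduct

noncomputable section

/-- The weight space `A_w = {y ∈ A | O_x(y) = w • y}` of the operator `O_x` induced on `A`
by `ad(x)` (the bracket `⁅x, ℓ y⁆` equals `w • ℓ y` modulo the centre `k•c`). -/
def weightSubmodule {k A Lhat : Type} [Field k] [AddCommGroup A] [Module k A]
    [LieRing Lhat] [LieAlgebra k Lhat]
    (ℓ : A →ₗ[k] Lhat) (x c : Lhat) (w : k) : Submodule k A where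
  carrier := {y | ∃ μ : k, ⁅x, ℓ y⁆ = w • ℓ y + μ • c}
  add_mem' := by
    rintro a b ⟨μa, ha⟩ ⟨μb, hb⟩
    exact ⟨μa + μb, by rw [map_add, lie_add, ha, hb]; module⟩
  zero_mem' := ⟨0, by simp⟩
  smul_mem' := by
    rintro t a ⟨μ, h⟩
    exact ⟨t * μ, by rw [map_smul, lie_smul, h]; module⟩

/-- Multiplication by `tⁿ` (with `t = LaurentPolynomial.T 1`) on an `R`-module `A`,
`R = k[t^{±1}]`, as a `k`-linear map. -/
def tMul (k A : Type) [Field k] [AddCommGroup A] [Module (LaurentPolynomial k) A]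
    [Module k A] [IsScalarTower k (LaurentPolynomial k) A] (n : ℤ) : A →ₗ[k] A where
  toFun a := (LaurentPolynomial.T n : LaurentPolynomial k) • a
  map_add' a b := smul_add _ a b
  map_smul' t a := by
    simp only [RingHom.id_apply]
    rw [← algebraMap_smul (LaurentPolynomial k) t a,
      ← algebraMap_smul (LaurentPolynomial k) t
        ((LaurentPolynomial.T n : LaurentPolynomial k) • a),
      smul_smul, smul_smul, mul_comm]

theorem zpow_add_mul_eq_of_pow_eq_one {G₀ : Type*} [GroupWithZero G₀] {ζ : G₀} {m : ℕ}
    (hζ : ζ ^ m = 1) (p q : ℤ) : ζ ^ (p + m * q) = ζ ^ p := by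
  rcases eq_or_ne m 0 with rfl | hm
  · simp
  have hζ0 : ζ ≠ 0 := by rintro rfl; simp [zero_pow hm] at hζ
  rw [zpow_add₀ hζ0, zpow_mul, zpow_natCast, hζ, one_zpow, mul_one]

theorem LaurentPolynomial.T_smul_T_neg_smul {R M : Type*} [CommSemiring R] [AddCommMonoid M]
    [Module R[T;T⁻¹] M] (n : ℤ) (y : M) : (T n : R[T;T⁻¹]) • (T (-n) : R[T;T⁻¹]) • y = y := by
  rw [← mul_smul, ← T_add, add_neg_cancel, T_zero, one_smul]

section tMul

variable {k A : Type} [Field k] [AddCommGroup A] [Module k[T;T⁻¹] A] [Module k A]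
  [IsScalarTower k k[T;T⁻¹] A]

theorem tMul_injective (n : ℤ) : Function.Injective (tMul k A n) :=
  Function.LeftInverse.injective (g := tMul k A (-n)) fun y =>
    show (T (-n) : k[T;T⁻¹]) • (T n : k[T;T⁻¹]) • y = y by
      simpa using T_smul_T_neg_smul (R := k) (-n) y

theorem eq_map_tMul_of_forall_T_smul_mem (V : k → Submodule k A) (m : ℕ)
    (hV : ∀ (w : k) (n : ℤ), ∀ y ∈ V w, (T n : k[T;T⁻¹]) • y ∈ V (w + ((m * n : ℤ) : k)))
    (w : k) (n : ℤ) : V (w + ((m * n : ℤ) : k)) = (V w).map (tMul k A n) := by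
  apply le_antisymm
  · intro z hz
    refine ⟨(T (-n) : k[T;T⁻¹]) • z, ?_, T_smul_T_neg_smul n z⟩
    have hback := hV _ (-n) z hz
    rwa [Int.cast_mul, Int.cast_mul, Int.cast_neg, add_assoc, mul_neg, add_neg_cancel,
      add_zero] at hback
  · rintro _ ⟨y, hy, rfl⟩
    exact hV w n y hy

end tMul

namespace TwistedLoop

variable {k 𝔤 Lg Lhat : Type} [Field k] {σ : 𝔤 → 𝔤} {ζ : k} {m : ℕ}

/-- The elements `y ⊗ sᵖ` with `y ∈ 𝔤_p̄`. -/
def generators [AddCommGroup 𝔤] [Module k 𝔤] [AddCommGroup Lg] [Module k Lg]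
    (σ : 𝔤 → 𝔤) (ζ : k) (u : ℤ → 𝔤 →ₗ[k] Lg) : Set Lg :=
  {l | ∃ (p : ℤ) (y : 𝔤), σ y = ζ ^ p • y ∧ u p y = l}

section Module

variable [AddCommGroup 𝔤] [Module k 𝔤] [AddCommGroup Lg] [Module k Lg] {u : ℤ → 𝔤 →ₗ[k] Lg}

theorem mem_span_generators
    (hu_span : ∀ l : Lg, ∃ f : ℤ →₀ 𝔤, (∀ i, σ (f i) = ζ ^ i • f i) ∧
      l = f.sum fun i yi => u i yi) (l : Lg) :
    l ∈ Submodule.span k (generators σ ζ u) := by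
  obtain ⟨f, hf, rfl⟩ := hu_span l
  exact Submodule.sum_mem _ fun i _ => Submodule.subset_span ⟨i, f i, hf i, rfl⟩

theorem T_smul_eq [Module k[T;T⁻¹] Lg] (hζ : ζ ^ m = 1)
    (hu_t : ∀ (p : ℤ) (y : 𝔤), σ y = ζ ^ p • y → (T 1 : k[T;T⁻¹]) • u p y = u (p + m) y)
    (q p : ℤ) {y : 𝔤} (hy : σ y = ζ ^ p • y) :
    (T q : k[T;T⁻¹]) • u p y = u (p + m * q) y := by
  have hnat : ∀ (n : ℕ) (p : ℤ), σ y = ζ ^ p • y →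
      (T n : k[T;T⁻¹]) • u p y = u (p + m * n) y := by
    intro n
    induction n with
    | zero => simp
    | succ n ih =>
      intro p hp
      have hp' : σ y = ζ ^ (p + m * n) • y := by rwa [zpow_add_mul_eq_of_pow_eq_one hζ]
      rw [Nat.cast_succ, T_add, mul_comm, mul_smul, ih p hp, hu_t _ _ hp']
      ring_nf
  obtain ⟨n, rfl | rfl⟩ := Int.eq_nat_or_neg q
  · exact hnat n p hy
  · have hy' : σ y = ζ ^ (p + m * -(n : ℤ)) • y := by rwa [zpow_add_mul_eq_of_pow_eq_one hζ]
    have hback := hnat n _ hy'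
    rw [add_assoc, ← mul_add, neg_add_cancel, mul_zero, add_zero] at hback
    rw [← hback]
    simpa using T_smul_T_neg_smul (-n : ℤ) (u (p + m * -(n : ℤ)) y)

end Module

section Lie

variable [LieRing 𝔤] [LieAlgebra k 𝔤] [LieRing Lg] [LieRing Lhat] [LieAlgebra k Lhat]
  {c d : Lhat}

theorem exists_lie_map_eq_map_lie_add_smul [LieAlgebra k Lg] {u : ℤ → 𝔤 →ₗ[k] Lg}
    {ι : Lg →ₗ[k] Lhat} {β : ℤ → ℤ → 𝔤 → 𝔤 → k}
    (hu_span : ∀ l : Lg, ∃ f : ℤ →₀ 𝔤, (∀ i, σ (f i) = ζ ^ i • f i) ∧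
      l = f.sum fun i yi => u i yi)
    (hu_bracket : ∀ (p q : ℤ) (y z : 𝔤), σ y = ζ ^ p • y → σ z = ζ ^ q • z →
      ⁅u p y, u q z⁆ = u (p + q) ⁅y, z⁆)
    (hbr : ∀ (p q : ℤ) (y z : 𝔤), σ y = ζ ^ p • y → σ z = ζ ^ q • z →
      ⁅ι (u p y), ι (u q z)⁆ = ι (u (p + q) ⁅y, z⁆) + β p q y z • c)
    (a b : Lg) : ∃ μ : k, ⁅ι a, ι b⁆ = ι ⁅a, b⁆ + μ • c := by
  let defect : Lg →ₗ[k] Lg →ₗ[k] Lhat := LinearMap.mk₂ k (fun a b => ⁅ι a, ι b⁆ - ι ⁅a, b⁆)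
    (fun _ _ _ => by simp only [map_add, add_lie]; abel)
    (fun _ _ _ => by simp only [map_smul, smul_lie, smul_sub])
    (fun _ _ _ => by simp only [map_add, lie_add]; abel)
    (fun _ _ _ => by simp only [map_smul, lie_smul, smul_sub])
  have hgen : Submodule.map₂ defect (Submodule.span k (generators σ ζ u))
      (Submodule.span k (generators σ ζ u)) ≤ Submodule.span k {c} := by
    rw [Submodule.map₂_span_span, Submodule.span_le]
    rintro _ ⟨_, ⟨p, y, hy, rfl⟩, _, ⟨q, z, hz, rfl⟩, rfl⟩
    simpa [defect, hbr p q y z hy hz, hu_bracket p q y z hy hz]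
      using Submodule.smul_mem _ (β p q y z) (Submodule.mem_span_singleton_self c)
  obtain ⟨μ, hμ⟩ := Submodule.mem_span_singleton.mp <| hgen <|
    Submodule.apply_mem_map₂ defect (mem_span_generators hu_span a)
      (mem_span_generators hu_span b)
  exact ⟨μ, sub_eq_iff_eq_add'.mp hμ.symm⟩

theorem exists_lie_d_map_T_smul [LieAlgebra k[T;T⁻¹] Lg] [LieAlgebra k Lg]
    [IsScalarTower k k[T;T⁻¹] Lg] {u : ℤ → 𝔤 →ₗ[k] Lg} {ι : Lg →ₗ[k] Lhat} (hζ : ζ ^ m = 1)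
    (hu_t : ∀ (p : ℤ) (y : 𝔤), σ y = ζ ^ p • y → (T 1 : k[T;T⁻¹]) • u p y = u (p + m) y)
    (hu_span : ∀ l : Lg, ∃ f : ℤ →₀ 𝔤, (∀ i, σ (f i) = ζ ^ i • f i) ∧
      l = f.sum fun i yi => u i yi)
    (hd : ∀ (p : ℤ) (y : 𝔤), σ y = ζ ^ p • y → ⁅d, ι (u p y)⁆ = (p : k) • ι (u p y))
    (n : ℤ) (l : Lg) :
    ∃ D : Lg, ⁅d, ι l⁆ = ι D ∧ ⁅d, ι ((T n : k[T;T⁻¹]) • l)⁆ =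
      ι ((T n : k[T;T⁻¹]) • D + ((m * n : ℤ) : k) • (T n : k[T;T⁻¹]) • l) := by
  induction mem_span_generators hu_span l using Submodule.span_induction with
  | mem _ hl =>
    obtain ⟨p, y, hy, rfl⟩ := hl
    have hy' : σ y = ζ ^ (p + m * n) • y := by rwa [zpow_add_mul_eq_of_pow_eq_one hζ]
    refine ⟨(p : k) • u p y, by rw [hd p y hy, map_smul], ?_⟩
    rw [smul_comm, T_smul_eq hζ hu_t n p hy, hd _ y hy', ← add_smul, map_smul]
    push_cast
    ring_nf
  | zero => exact ⟨0, by simp, by simp⟩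
  | add l₁ l₂ _ _ h₁ h₂ =>
    obtain ⟨D₁, h₁, h₁'⟩ := h₁
    obtain ⟨D₂, h₂, h₂'⟩ := h₂
    refine ⟨D₁ + D₂, by rw [map_add, lie_add, h₁, h₂, map_add], ?_⟩
    rw [smul_add, map_add, lie_add, h₁', h₂', ← map_add]
    congr 1
    module
  | smul a l _ h =>
    obtain ⟨D, h, h'⟩ := h
    refine ⟨a • D, by rw [map_smul, lie_smul, h, map_smul], ?_⟩
    rw [smul_comm, map_smul, lie_smul, h', ← map_smul]
    congr 1
    rw [smul_add, smul_comm a (T n : k[T;T⁻¹]) D, smul_comm a ((m * n : ℤ) : k)]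

end Lie

theorem T_smul_mem_weightSubmodule {A : Type} [LieRing A] [LieAlgebra k[T;T⁻¹] A] [Module k A]
    [LieRing Lg] [LieAlgebra k[T;T⁻¹] Lg] [LieAlgebra k Lg] [IsScalarTower k k[T;T⁻¹] Lg]
    [LieRing Lhat] [LieAlgebra k Lhat] {c d : Lhat} {ι : Lg →ₗ[k] Lhat}
    (huniq : ∀ (l : Lg) (a b : k), ι l + a • c + b • d = 0 → l = 0 ∧ a = 0 ∧ b = 0)
    (hlie : ∀ a b : Lg, ∃ μ : k, ⁅ι a, ι b⁆ = ι ⁅a, b⁆ + μ • c)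
    (hder : ∀ (n : ℤ) (l : Lg), ∃ D : Lg, ⁅d, ι l⁆ = ι D ∧ ⁅d, ι ((T n : k[T;T⁻¹]) • l)⁆ =
      ι ((T n : k[T;T⁻¹]) • D + ((m * n : ℤ) : k) • (T n : k[T;T⁻¹]) • l))
    (j : A →ₗ⁅k[T;T⁻¹]⁆ Lg) {ℓ : A →ₗ[k] Lhat} (hℓ : ∀ a : A, ℓ a = ι (j a))
    {x' : A} {x : Lhat} (hx : x = ℓ x' + d) {w : k} (n : ℤ) {y : A}
    (hy : y ∈ weightSubmodule ℓ x c w) :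
    (T n : k[T;T⁻¹]) • y ∈ weightSubmodule ℓ x c (w + ((m * n : ℤ) : k)) := by
  obtain ⟨μ, hμ⟩ := hy
  have hinj : ∀ (l l' : Lg) (a b : k), ι l + a • c = ι l' + b • c → l = l' := by
    intro l l' a b h
    refine sub_eq_zero.mp (huniq (l - l') (a - b) 0 ?_).1
    rw [map_sub, sub_smul, zero_smul, add_zero, ← sub_eq_zero.mpr h]
    abel
  have hx_lie : ∀ z : A, ⁅x, ℓ z⁆ = ⁅ι (j x'), ι (j z)⁆ + ⁅d, ι (j z)⁆ := by
    intro z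
    rw [hx, add_lie, hℓ, hℓ]
  obtain ⟨D, hD, hDn⟩ := hder n (j y)
  obtain ⟨μ₀, hμ₀⟩ := hlie (j x') (j y)
  obtain ⟨μ₁, hμ₁⟩ := hlie (j x') (j ((T n : k[T;T⁻¹]) • y))
  have hweight : ⁅j x', j y⁆ + D = w • j y := by
    refine hinj _ _ μ₀ μ ?_
    rw [map_add, map_smul, ← hℓ, ← hμ, hx_lie, hμ₀, hD]
    abel
  refine ⟨μ₁, ?_⟩
  calc ⁅x, ℓ ((T n : k[T;T⁻¹]) • y)⁆
      = ι ((T n : k[T;T⁻¹]) • (⁅j x', j y⁆ + D) +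
          ((m * n : ℤ) : k) • (T n : k[T;T⁻¹]) • j y) + μ₁ • c := by
        rw [hx_lie, hμ₁, map_smul j, hDn, lie_smul, smul_add, map_add, map_add, map_add]
        abel
    _ = (w + ((m * n : ℤ) : k)) • ℓ ((T n : k[T;T⁻¹]) • y) + μ₁ • c := by
        rw [hweight, smul_comm, ← add_smul, map_smul, hℓ, map_smul j]

end TwistedLoop

theorem weight_space_shift_general
    -- the base field
    (k : Type) [Field k]
    -- the simple finite-dimensional Lie algebra 𝔤
    (𝔤 : Type) [LieRing 𝔤] [LieAlgebra k 𝔤]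
    -- the order m of σ and a primitive m-th root of unity ζ
    (m : ℕ)
    (σ : 𝔤 ≃ₗ⁅k⁆ 𝔤)
    (ζ : k) (hζ : IsPrimitiveRoot ζ m)
    -- the twisted loop algebra L(𝔤,σ) = ⊕_{i∈ℤ} 𝔤_ī ⊗ sⁱ, an R-Lie algebra for
    -- R = k[t^{±1}] = LaurentPolynomial k (with t = sᵐ);
    -- `u p y` represents `y ⊗ sᵖ` for `y ∈ 𝔤_p̄`, i.e. `σ y = ζ^p • y`
    (Lg : Type) [LieRing Lg] [LieAlgebra (LaurentPolynomial k) Lg]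
    [LieAlgebra k Lg] [IsScalarTower k (LaurentPolynomial k) Lg]
    (u : ℤ → 𝔤 →ₗ[k] Lg)
    (hu_bracket : ∀ (p q : ℤ) (y z : 𝔤), σ y = ζ ^ p • y → σ z = ζ ^ q • z →
      ⁅u p y, u q z⁆ = u (p + q) ⁅y, z⁆)
    (hu_t : ∀ (p : ℤ) (y : 𝔤), σ y = ζ ^ p • y →
      (T 1 : LaurentPolynomial k) • u p y = u (p + (m : ℤ)) y)
    (hu_span : ∀ l : Lg, ∃ f : ℤ →₀ 𝔤, (∀ i, σ (f i) = ζ ^ i • f i) ∧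
      l = f.sum fun i yi => u i yi)
    -- the twisted affine Kac–Moody algebra L̂(𝔤,σ) = L(𝔤,σ) ⊕ kc ⊕ kd
    (Lhat : Type) [LieRing Lhat] [LieAlgebra k Lhat]
    (c d : Lhat) (ι : Lg →ₗ[k] Lhat)
    (hd : ∀ (p : ℤ) (y : 𝔤), σ y = ζ ^ p • y →
      ⁅d, ι (u p y)⁆ = (p : k) • ι (u p y))
    (hbr : ∀ (p q : ℤ) (y z : 𝔤), σ y = ζ ^ p • y → σ z = ζ ^ q • z →
      ⁅ι (u p y), ι (u q z)⁆ =
        ι (u (p + q) ⁅y, z⁆) +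
          (if p + q = 0 then (p : k) * killingForm k 𝔤 y z else 0) • c)
    (huniq : ∀ (l : Lg) (a b : k), ι l + a • c + b • d = 0 → l = 0 ∧ a = 0 ∧ b = 0)
    -- the R-Lie subalgebra A of L(𝔤,σ), free of finite rank over R,
    -- with A ⊗_R K semisimple over the fraction field K of R
    (A : Type) [LieRing A] [LieAlgebra (LaurentPolynomial k) A]
    [Module k A] [IsScalarTower k (LaurentPolynomial k) A]
    (j : A →ₗ⁅LaurentPolynomial k⁆ Lg)
    -- the embedding ℓ = ι ∘ j of A into L̂(𝔤,σ)
    (ℓ : A →ₗ[k] Lhat) (hℓ : ∀ a : A, ℓ a = ι (j a))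
    -- the element x = x' + d with 0 ≠ x' ∈ A, with ad(x) k-diagonalizable on Â
    (x' : A) (x : Lhat) (hx : x = ℓ x' + d)
    -- a nonzero weight w of O_x, and an integer n
    (w : k) (hwweight : weightSubmodule ℓ x c w ≠ ⊥) (n : ℤ) :
    weightSubmodule ℓ x c (w + (((m : ℤ) * n : ℤ) : k)) ≠ ⊥ ∧
    weightSubmodule ℓ x c (w + (((m : ℤ) * n : ℤ) : k)) =
      Submodule.map (tMul k A n) (weightSubmodule ℓ x c w) := by
  have hshift : ∀ (w : k) (n : ℤ), ∀ y ∈ weightSubmodule ℓ x c w,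
      (T n : k[T;T⁻¹]) • y ∈ weightSubmodule ℓ x c (w + ((m * n : ℤ) : k)) :=
    fun _ n _ ↦ TwistedLoop.T_smul_mem_weightSubmodule huniq
      (TwistedLoop.exists_lie_map_eq_map_lie_add_smul hu_span hu_bracket hbr)
      (TwistedLoop.exists_lie_d_map_T_smul hζ.pow_eq_one hu_t hu_span hd) j hℓ hx n
  have hmap := eq_map_tMul_of_forall_T_smul_mem _ m hshift w n
  refine ⟨?_, hmap⟩
  rw [hmap, Ne, ← Submodule.map_bot (tMul k A n)]
  exact (Submodule.map_injective_of_injective (tMul_injective n)).ne hwweight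

/-- If `w ≠ 0` is a weight of `O_x` and `n ∈ ℤ`, then `w + mn` is a
weight of `O_x` and `A_{w+mn} = tⁿ • A_w`. -/
theorem weight_space_shift
    -- the base field
    (k : Type) [Field k] [IsAlgClosed k] [CharZero k]
    -- the simple finite-dimensional Lie algebra 𝔤
    (𝔤 : Type) [LieRing 𝔤] [LieAlgebra k 𝔤] [FiniteDimensional k 𝔤]
    [LieAlgebra.IsSimple k 𝔤]
    -- the order m of σ and a primitive m-th root of unity ζ
    (m : ℕ) (hm : 0 < m)
    (σ : 𝔤 ≃ₗ⁅k⁆ 𝔤) (hσ : ∀ y : 𝔤, (⇑σ)^[m] y = y)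
    (ζ : k) (hζ : IsPrimitiveRoot ζ m)
    -- the twisted loop algebra L(𝔤,σ) = ⊕_{i∈ℤ} 𝔤_ī ⊗ sⁱ, an R-Lie algebra for
    -- R = k[t^{±1}] = LaurentPolynomial k (with t = sᵐ);
    -- `u p y` represents `y ⊗ sᵖ` for `y ∈ 𝔤_p̄`, i.e. `σ y = ζ^p • y`
    (Lg : Type) [LieRing Lg] [LieAlgebra (LaurentPolynomial k) Lg]
    [LieAlgebra k Lg] [IsScalarTower k (LaurentPolynomial k) Lg]
    (u : ℤ → 𝔤 →ₗ[k] Lg)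
    (hu_bracket : ∀ (p q : ℤ) (y z : 𝔤), σ y = ζ ^ p • y → σ z = ζ ^ q • z →
      ⁅u p y, u q z⁆ = u (p + q) ⁅y, z⁆)
    (hu_t : ∀ (p : ℤ) (y : 𝔤), σ y = ζ ^ p • y →
      (T 1 : LaurentPolynomial k) • u p y = u (p + (m : ℤ)) y)
    (hu_span : ∀ l : Lg, ∃ f : ℤ →₀ 𝔤, (∀ i, σ (f i) = ζ ^ i • f i) ∧
      l = f.sum fun i yi => u i yi)
    (hu_ind : ∀ f : ℤ →₀ 𝔤, (∀ i, σ (f i) = ζ ^ i • f i) →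
      (f.sum fun i yi => u i yi) = 0 → f = 0)
    -- the twisted affine Kac–Moody algebra L̂(𝔤,σ) = L(𝔤,σ) ⊕ kc ⊕ kd
    (Lhat : Type) [LieRing Lhat] [LieAlgebra k Lhat]
    (c d : Lhat) (ι : Lg →ₗ[k] Lhat)
    (hc : ∀ z : Lhat, ⁅c, z⁆ = 0)
    (hd : ∀ (p : ℤ) (y : 𝔤), σ y = ζ ^ p • y →
      ⁅d, ι (u p y)⁆ = (p : k) • ι (u p y))
    (hbr : ∀ (p q : ℤ) (y z : 𝔤), σ y = ζ ^ p • y → σ z = ζ ^ q • z →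
      ⁅ι (u p y), ι (u q z)⁆ =
        ι (u (p + q) ⁅y, z⁆) +
          (if p + q = 0 then (p : k) * killingForm k 𝔤 y z else 0) • c)
    (hdec : ∀ z : Lhat, ∃ (l : Lg) (a b : k), z = ι l + a • c + b • d)
    (huniq : ∀ (l : Lg) (a b : k), ι l + a • c + b • d = 0 → l = 0 ∧ a = 0 ∧ b = 0)
    -- the invariant nondegenerate bilinear form (·,·) on L̂(𝔤,σ)
    (B : LinearMap.BilinForm k Lhat)
    (hBsymm : ∀ z w : Lhat, B z w = B w z)
    (hBinv : ∀ z w y : Lhat, B ⁅z, w⁆ y = B z ⁅w, y⁆)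
    (hBval : ∀ (p q : ℤ) (y z : 𝔤), σ y = ζ ^ p • y → σ z = ζ ^ q • z →
      B (ι (u p y)) (ι (u q z)) = if p + q = 0 then killingForm k 𝔤 y z else 0)
    (hBc : ∀ l : Lg, B c (ι l) = 0) (hBd : ∀ l : Lg, B d (ι l) = 0)
    (hBcc : B c c = 0) (hBdd : B d d = 0) (hBcd : B c d = 1)
    -- the R-Lie subalgebra A of L(𝔤,σ), free of finite rank over R,
    -- with A ⊗_R K semisimple over the fraction field K of R
    (A : Type) [LieRing A] [LieAlgebra (LaurentPolynomial k) A]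
    [Module k A] [IsScalarTower k (LaurentPolynomial k) A]
    [Module.Free (LaurentPolynomial k) A] [Module.Finite (LaurentPolynomial k) A]
    (hss : LieAlgebra.IsSemisimple (FractionRing (LaurentPolynomial k))
      (FractionRing (LaurentPolynomial k) ⊗[LaurentPolynomial k] A))
    (j : A →ₗ⁅LaurentPolynomial k⁆ Lg) (hj : Function.Injective j)
    -- the embedding ℓ = ι ∘ j of A into L̂(𝔤,σ)
    (ℓ : A →ₗ[k] Lhat) (hℓ : ∀ a : A, ℓ a = ι (j a))
    -- Â = A ⊕ kc ⊕ kd, a subalgebra of L̂(𝔤,σ) on which the form is nondegenerate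
    (Ahat : Submodule k Lhat)
    (hAhat : Ahat = LinearMap.range ℓ ⊔ Submodule.span k {c} ⊔ Submodule.span k {d})
    (hA_closed : ∀ z ∈ Ahat, ∀ w ∈ Ahat, ⁅z, w⁆ ∈ Ahat)
    (hBnd : ∀ z ∈ Ahat, (∀ w ∈ Ahat, B z w = 0) → z = 0)
    -- the element x = x' + d with 0 ≠ x' ∈ A, with ad(x) k-diagonalizable on Â
    (x' : A) (hx'0 : x' ≠ 0) (x : Lhat) (hx : x = ℓ x' + d)
    (hdiag : ∀ z ∈ Ahat, z ∈ ⨆ w : k,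
      Ahat ⊓ Module.End.eigenspace (LieAlgebra.ad k Lhat x) w)
    -- a nonzero weight w of O_x, and an integer n
    (w : k) (hw : w ≠ 0) (hwweight : weightSubmodule ℓ x c w ≠ ⊥) (n : ℤ) :
    weightSubmodule ℓ x c (w + (((m : ℤ) * n : ℤ) : k)) ≠ ⊥ ∧
    weightSubmodule ℓ x c (w + (((m : ℤ) * n : ℤ) : k)) =
      Submodule.map (tMul k A n) (weightSubmodule ℓ x c w) :=
  weight_space_shift_general k 𝔤 m σ ζ hζ Lg u hu_bracket hu_t hu_span Lhat c d ι hd hbr huniq A j ℓ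
    hℓ x' x hx w hwweight n
end
end

section
/- In the setup below, let w be a weight of O_x. Then the R-span A_w·R of A_w in A equals the direct sum ⊕_{n∈ℤ} A_{w+mn}, and the k-linear map ν: A_w ⊗_k R → A_w·R given by y ⊗ tⁿ ↦ y·tⁿ is bijective. -/
/-!
Modulo the centre `k c`, `ad x` acts on the loop algebra as `ad x' + D`, where `ad x'` is
`R`-linear and the degree derivation `D` satisfies `D (tⁿ l) = tⁿ D l + m n tⁿ l`. Hence
multiplication by `tⁿ` maps `A_v` into `A_{v+mn}`, so `A_w·R = ∑ₙ tⁿ A_w = ∑ₙ A_{w+mn}`. The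
`A_v` are pulled back along the injection `A → L̂/kc` from eigenspaces of the operator induced by
`ad x`, so this sum is direct; and a tensor `∑ yₙ ⊗ tⁿ` goes to `∑ tⁿ yₙ`, whose components lie
in these independent spaces, so `ν` is injective.
-/

open LaurentPolynomial TensorProduct

noncomputable section

/-- For a `k`-subspace `W` of an `R`-module `A` (`R = k[t^{±1}]`), the natural map
`ν : W ⊗_k R → A`, `y ⊗ r ↦ r • y`. -/
def nuMap (k A : Type) [Field k] [AddCommGroup A] [Module (LaurentPolynomial k) A]
    [Module k A] [IsScalarTower k (LaurentPolynomial k) A] (W : Submodule k A) :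
    (W ⊗[k] LaurentPolynomial k) →ₗ[k] A :=
  TensorProduct.lift
    { toFun := fun y =>
        { toFun := fun r => r • (y : A)
          map_add' := fun r s => add_smul r s (y : A)
          map_smul' := fun t r => by
            simp only [RingHom.id_apply]
            rw [smul_assoc] }
      map_add' := fun y z => LinearMap.ext fun r => by
        simp only [LinearMap.coe_mk, AddHom.coe_mk, LinearMap.add_apply,
          Submodule.coe_add]
        rw [smul_add]
      map_smul' := fun t y => LinearMap.ext fun r => by
        simp only [RingHom.id_apply, LinearMap.coe_mk, AddHom.coe_mk,
          LinearMap.smul_apply, SetLike.val_smul]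
        rw [← algebraMap_smul (LaurentPolynomial k) t (y : A), smul_smul, mul_comm,
          ← smul_smul, algebraMap_smul] }


theorem iSupIndep_comap_of_injective {R M M' ι : Type*} [Ring R] [AddCommGroup M] [Module R M]
    [AddCommGroup M'] [Module R M'] {f : M →ₗ[R] M'} (hf : Function.Injective f)
    {p : ι → Submodule R M'} (hp : iSupIndep p) : iSupIndep fun i ↦ (p i).comap f := by
  rw [iSupIndep_iff_finsetSum_eq_zero_imp_eq_zero] at hp ⊢
  intro s v hv hsum i hi
  exact hf <| by simpa using hp s (f ∘ v) hv (by simp [← map_sum, hsum]) i hi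

theorem Submodule.injective_mkQ_span_singleton_comp {R M N : Type*} [Ring R] [AddCommGroup M]
    [Module R M] [AddCommGroup N] [Module R N] {f : M →ₗ[R] N} {c : N}
    (h : ∀ (y : M) (a : R), f y + a • c = 0 → y = 0) :
    Function.Injective ((R ∙ c).mkQ ∘ₗ f) := by
  rw [← LinearMap.ker_eq_bot, Submodule.eq_bot_iff]
  intro y hy
  obtain ⟨a, ha⟩ := Submodule.mem_span_singleton.mp ((Submodule.Quotient.mk_eq_zero _).mp hy)
  exact h y (-a) (by rw [← ha, neg_smul, add_neg_cancel])

section WeightSubmodule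

variable {k A L : Type} [Field k] [AddCommGroup A] [Module k A] [LieRing L] [LieAlgebra k L]
  {ℓ : A →ₗ[k] L} {x c : L}

theorem mem_weightSubmodule_iff {v : k} {y : A} :
    y ∈ weightSubmodule ℓ x c v ↔ (k ∙ c).mkQ ⁅x, ℓ y⁆ = v • (k ∙ c).mkQ (ℓ y) := by
  rw [← sub_eq_zero, ← map_smul, ← map_sub, Submodule.mkQ_apply, Submodule.Quotient.mk_eq_zero,
    Submodule.mem_span_singleton]
  exact exists_congr fun μ ↦ by rw [eq_sub_iff_add_eq', eq_comm]

theorem iSupIndep_weightSubmodule (hxc : ⁅x, c⁆ = 0)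
    (hℓ : Function.Injective ((k ∙ c).mkQ ∘ₗ ℓ)) : iSupIndep (weightSubmodule ℓ x c) := by
  let O : Module.End k (L ⧸ k ∙ c) := (k ∙ c).mapQ (k ∙ c) (LieAlgebra.ad k L x)
    ((Submodule.span_singleton_le_iff_mem _ _).mpr (by simp [hxc]))
  have hO : weightSubmodule ℓ x c = fun v ↦ (O.eigenspace v).comap ((k ∙ c).mkQ ∘ₗ ℓ) := by
    ext v y
    simp [mem_weightSubmodule_iff, O]
  rw [hO]
  exact iSupIndep_comap_of_injective hℓ O.eigenspaces_iSupIndep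

end WeightSubmodule

section LaurentGraded

variable {k A : Type} [Field k] [AddCommGroup A] [Module k[T;T⁻¹] A] [Module k A]
  [IsScalarTower k k[T;T⁻¹] A]

theorem LaurentPolynomial.span_range_T : Submodule.span k (Set.range (T : ℤ → k[T;T⁻¹])) = ⊤ :=
  (AddMonoidAlgebra.basis ℤ k).span_eq

omit [Module k A] [IsScalarTower k k[T;T⁻¹] A] in
theorem LaurentPolynomial.T_smul_T_neg_smul_s7 (n : ℤ) (y : A) :
    (T n : k[T;T⁻¹]) • (T (-n) : k[T;T⁻¹]) • y = y := by
  rw [smul_smul, ← T_add, add_neg_cancel, T_zero, one_smul]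

@[simp]
theorem nuMap_tmul (W : Submodule k A) (y : W) (r : k[T;T⁻¹]) :
    nuMap k A W (y ⊗ₜ r) = r • (y : A) :=
  TensorProduct.lift.tmul y r

theorem range_nuMap (W : Submodule k A) :
    LinearMap.range (nuMap k A W) = (Submodule.span k[T;T⁻¹] (W : Set A)).restrictScalars k := by
  rw [← Submodule.span_smul_of_span_eq_top Submodule.span_univ, LinearMap.range_eq_map,
    ← TensorProduct.span_tmul_eq_top, Submodule.map_span]
  congr 1
  ext z
  simp only [Subtype.exists, Set.mem_image, Set.mem_ofPred_eq, existsAndEq, nuMap_tmul,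
    true_and, exists_prop, Set.mem_smul, Set.mem_univ, SetLike.mem_coe]
  exact ⟨fun ⟨y, hy, r, h⟩ ↦ ⟨r, y, hy, h⟩, fun ⟨r, y, hy, h⟩ ↦ ⟨y, hy, r, h⟩⟩

variable {V : ℤ → Submodule k A}

theorem span_restrictScalars_eq_iSup (hV : ∀ i n, ∀ y ∈ V i, (T n : k[T;T⁻¹]) • y ∈ V (i + n)) :
    (Submodule.span k[T;T⁻¹] (V 0 : Set A)).restrictScalars k = ⨆ n, V n := by
  rw [← Submodule.span_smul_of_span_eq_top span_range_T]
  apply le_antisymm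
  · rw [Submodule.span_le]
    rintro _ ⟨_, ⟨n, rfl⟩, y, hy, rfl⟩
    exact Submodule.mem_iSup_of_mem n (by simpa using hV 0 n y hy)
  · refine iSup_le fun n y hy ↦ Submodule.subset_span ?_
    exact ⟨T n, ⟨n, rfl⟩, T (-n) • y, by simpa using hV n (-n) y hy, T_smul_T_neg_smul_s7 n y⟩

theorem nuMap_injective (hV : ∀ i n, ∀ y ∈ V i, (T n : k[T;T⁻¹]) • y ∈ V (i + n))
    (hind : iSupIndep V) :
    Function.Injective (nuMap k A (V 0)) := by
  classical
  let e := TensorProduct.equivFinsuppOfBasisRight (M := V 0) (AddMonoidAlgebra.basis ℤ k)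
  rw [← LinearMap.ker_eq_bot, Submodule.eq_bot_iff]
  intro z hz
  obtain ⟨F, rfl⟩ := e.symm.surjective z
  have hsum : ∑ n ∈ F.support, (T n : k[T;T⁻¹]) • (F n : A) = 0 := by
    simpa [e, Finsupp.sum, map_sum] using hz
  have hF : F = 0 := by
    ext n
    by_cases hn : n ∈ F.support
    · have h := (iSupIndep_iff_finsetSum_eq_zero_imp_eq_zero V).mp hind F.support _
        (fun n _ ↦ by simpa using hV 0 n _ (F n).2) hsum n hn
      simpa [h] using (T_smul_T_neg_smul_s7 (k := k) (-n) (F n : A)).symm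
    · simpa using Finsupp.notMem_support_iff.mp hn
  simp [hF]

end LaurentGraded

theorem zpow_add_mul_of_pow_eq_one {K : Type*} [GroupWithZero K] {ζ : K} {m : ℕ} (hζ : ζ ^ m = 1)
    (p q : ℤ) : ζ ^ (p + m * q) = ζ ^ p := by
  obtain rfl | hm := m.eq_zero_or_pos
  · simp
  have hζ0 : ζ ≠ 0 := by
    rintro rfl
    simp [hm.ne'] at hζ
  rw [zpow_add₀ hζ0, zpow_mul, zpow_natCast, hζ, one_zpow, mul_one]

section TwistedLoop

variable {k 𝔤 Lg Lhat : Type*} [Field k] [LieRing 𝔤] [LieAlgebra k 𝔤]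
  [LieRing Lg] [LieAlgebra k Lg] [LieRing Lhat] [LieAlgebra k Lhat]
  {m : ℕ} {σ : 𝔤 ≃ₗ⁅k⁆ 𝔤} {ζ : k} {u : ℤ → 𝔤 →ₗ[k] Lg} {ι : Lg →ₗ[k] Lhat} {c d : Lhat}

theorem mkQ_lie_iota_eq
    (hu_span : ∀ l : Lg, ∃ f : ℤ →₀ 𝔤, (∀ i, σ (f i) = ζ ^ i • f i) ∧
      l = f.sum fun i yi => u i yi)
    (hu_bracket : ∀ (p q : ℤ) (y z : 𝔤), σ y = ζ ^ p • y → σ z = ζ ^ q • z →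
      ⁅u p y, u q z⁆ = u (p + q) ⁅y, z⁆)
    (hbr : ∀ (p q : ℤ) (y z : 𝔤), σ y = ζ ^ p • y → σ z = ζ ^ q • z →
      ⁅ι (u p y), ι (u q z)⁆ =
        ι (u (p + q) ⁅y, z⁆) +
          (if p + q = 0 then (p : k) * killingForm k 𝔤 y z else 0) • c)
    (a b : Lg) : (k ∙ c).mkQ ⁅ι a, ι b⁆ = (k ∙ c).mkQ (ι ⁅a, b⁆) := by
  obtain ⟨f, hf, rfl⟩ := hu_span a
  obtain ⟨g, hg, rfl⟩ := hu_span b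
  simp only [Finsupp.sum, map_sum, lie_sum, sum_lie]
  refine Finset.sum_congr rfl fun q _ ↦ Finset.sum_congr rfl fun p _ ↦ ?_
  rw [hbr _ _ _ _ (hf p) (hg q), hu_bracket _ _ _ _ (hf p) (hg q), map_add, map_smul]
  simp [Submodule.mem_span_singleton_self]

variable [LieAlgebra k[T;T⁻¹] Lg] [IsScalarTower k k[T;T⁻¹] Lg]

omit [IsScalarTower k k[T;T⁻¹] Lg] in
theorem T_smul_eq_shift (hζ : ζ ^ m = 1)
    (hu_t : ∀ (p : ℤ) (y : 𝔤), σ y = ζ ^ p • y →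
      (T 1 : k[T;T⁻¹]) • u p y = u (p + (m : ℤ)) y)
    (n p : ℤ) {y : 𝔤} (hy : σ y = ζ ^ p • y) :
    (T n : k[T;T⁻¹]) • u p y = u (p + m * n) y := by
  have hy' (q : ℤ) : σ y = ζ ^ (p + m * q) • y := by rw [zpow_add_mul_of_pow_eq_one hζ, hy]
  induction n using Int.induction_on with
  | zero => simp [T_zero]
  | succ n ih =>
    rw [T_add, mul_comm, mul_smul, ih, hu_t _ y (hy' n)]
    ring_nf
  | pred n ih =>
    have h := hu_t _ y (hy' (-n - 1))
    rw [show p + m * (-n - 1) + m = p + m * -n by ring, ← ih] at h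
    rw [show (-n - 1 : ℤ) = -1 + -n by ring, T_add, mul_smul, ← h, ← mul_smul, ← T_add,
      neg_add_cancel, T_zero, one_smul]
    ring_nf

theorem exists_lie_d_iota_eq (hζ : ζ ^ m = 1)
    (hu_t : ∀ (p : ℤ) (y : 𝔤), σ y = ζ ^ p • y →
      (T 1 : k[T;T⁻¹]) • u p y = u (p + (m : ℤ)) y)
    (hu_span : ∀ l : Lg, ∃ f : ℤ →₀ 𝔤, (∀ i, σ (f i) = ζ ^ i • f i) ∧
      l = f.sum fun i yi => u i yi)
    (hd : ∀ (p : ℤ) (y : 𝔤), σ y = ζ ^ p • y →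
      ⁅d, ι (u p y)⁆ = (p : k) • ι (u p y))
    (l : Lg) : ∃ l₁ : Lg, ⁅d, ι l⁆ = ι l₁ ∧ ∀ n : ℤ, ⁅d, ι ((T n : k[T;T⁻¹]) • l)⁆ =
      ι ((T n : k[T;T⁻¹]) • l₁) + ((m * n : ℤ) : k) • ι ((T n : k[T;T⁻¹]) • l) := by
  obtain ⟨f, hf, rfl⟩ := hu_span l
  refine ⟨f.sum fun p y ↦ (p : k) • u p y, ?_, fun n ↦ ?_⟩
  · simp only [Finsupp.sum, map_sum, lie_sum, map_smul, hd _ _ (hf _)]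
  · have hf' (p : ℤ) : σ (f p) = ζ ^ (p + m * n) • f p := by
      rw [zpow_add_mul_of_pow_eq_one hζ, hf]
    simp only [Finsupp.sum, Finset.smul_sum, map_sum, lie_sum, map_smul,
      smul_comm (T n : k[T;T⁻¹]) ((_ : ℤ) : k), T_smul_eq_shift hζ hu_t n _ (hf _),
      hd _ _ (hf' _), ← Finset.sum_add_distrib, ← add_smul]
    refine Finset.sum_congr rfl fun p _ ↦ ?_
    push_cast
    ring_nf

theorem mkQ_lie_T_smul (hι : Function.Injective ((k ∙ c).mkQ ∘ₗ ι))
    (hbracket : ∀ a b : Lg, (k ∙ c).mkQ ⁅ι a, ι b⁆ = (k ∙ c).mkQ (ι ⁅a, b⁆))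
    (hdeg : ∀ l : Lg, ∃ l₁ : Lg, ⁅d, ι l⁆ = ι l₁ ∧ ∀ n : ℤ, ⁅d, ι ((T n : k[T;T⁻¹]) • l)⁆ =
      ι ((T n : k[T;T⁻¹]) • l₁) + ((m * n : ℤ) : k) • ι ((T n : k[T;T⁻¹]) • l))
    {a l : Lg} {v : k} (h : (k ∙ c).mkQ ⁅ι a + d, ι l⁆ = v • (k ∙ c).mkQ (ι l)) (n : ℤ) :
    (k ∙ c).mkQ ⁅ι a + d, ι ((T n : k[T;T⁻¹]) • l)⁆ =
      (v + ((m * n : ℤ) : k)) • (k ∙ c).mkQ (ι ((T n : k[T;T⁻¹]) • l)) := by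
  obtain ⟨l₁, hl₁, hl₁T⟩ := hdeg l
  have hl : ⁅a, l⁆ + l₁ = v • l := hι <| by
    simpa only [LinearMap.comp_apply, map_add, map_smul, add_lie, hbracket, hl₁] using h
  calc (k ∙ c).mkQ ⁅ι a + d, ι ((T n : k[T;T⁻¹]) • l)⁆
      = (k ∙ c).mkQ (ι ((T n : k[T;T⁻¹]) • (⁅a, l⁆ + l₁))) +
          ((m * n : ℤ) : k) • (k ∙ c).mkQ (ι ((T n : k[T;T⁻¹]) • l)) := by
        rw [add_lie, map_add, hbracket, hl₁T, lie_smul, smul_add]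
        simp only [map_add, map_smul]
        abel
    _ = _ := by rw [hl, smul_comm, map_smul, map_smul, add_smul]

end TwistedLoop

theorem span_of_weight_space_general
    -- the base field
    (k : Type) [Field k] [CharZero k]
    -- the simple finite-dimensional Lie algebra 𝔤
    (𝔤 : Type) [LieRing 𝔤] [LieAlgebra k 𝔤]
    -- the order m of σ and a primitive m-th root of unity ζ
    (m : ℕ) (hm : 0 < m)
    (σ : 𝔤 ≃ₗ⁅k⁆ 𝔤)
    (ζ : k) (hζ : IsPrimitiveRoot ζ m)
    -- the twisted loop algebra L(𝔤,σ) = ⊕_{i∈ℤ} 𝔤_ī ⊗ sⁱ, an R-Lie algebra for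
    -- R = k[t^{±1}] = LaurentPolynomial k (with t = sᵐ);
    -- `u p y` represents `y ⊗ sᵖ` for `y ∈ 𝔤_p̄`, i.e. `σ y = ζ^p • y`
    (Lg : Type) [LieRing Lg] [LieAlgebra (LaurentPolynomial k) Lg]
    [LieAlgebra k Lg] [IsScalarTower k (LaurentPolynomial k) Lg]
    (u : ℤ → 𝔤 →ₗ[k] Lg)
    (hu_bracket : ∀ (p q : ℤ) (y z : 𝔤), σ y = ζ ^ p • y → σ z = ζ ^ q • z →
      ⁅u p y, u q z⁆ = u (p + q) ⁅y, z⁆)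
    (hu_t : ∀ (p : ℤ) (y : 𝔤), σ y = ζ ^ p • y →
      (T 1 : LaurentPolynomial k) • u p y = u (p + (m : ℤ)) y)
    (hu_span : ∀ l : Lg, ∃ f : ℤ →₀ 𝔤, (∀ i, σ (f i) = ζ ^ i • f i) ∧
      l = f.sum fun i yi => u i yi)
    -- the twisted affine Kac–Moody algebra L̂(𝔤,σ) = L(𝔤,σ) ⊕ kc ⊕ kd
    (Lhat : Type) [LieRing Lhat] [LieAlgebra k Lhat]
    (c d : Lhat) (ι : Lg →ₗ[k] Lhat)
    (hc : ∀ z : Lhat, ⁅c, z⁆ = 0)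
    (hd : ∀ (p : ℤ) (y : 𝔤), σ y = ζ ^ p • y →
      ⁅d, ι (u p y)⁆ = (p : k) • ι (u p y))
    (hbr : ∀ (p q : ℤ) (y z : 𝔤), σ y = ζ ^ p • y → σ z = ζ ^ q • z →
      ⁅ι (u p y), ι (u q z)⁆ =
        ι (u (p + q) ⁅y, z⁆) +
          (if p + q = 0 then (p : k) * killingForm k 𝔤 y z else 0) • c)
    (huniq : ∀ (l : Lg) (a b : k), ι l + a • c + b • d = 0 → l = 0 ∧ a = 0 ∧ b = 0)
    -- the R-Lie subalgebra A of L(𝔤,σ), free of finite rank over R,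
    -- with A ⊗_R K semisimple over the fraction field K of R
    (A : Type) [LieRing A] [LieAlgebra (LaurentPolynomial k) A]
    [Module k A] [IsScalarTower k (LaurentPolynomial k) A]
    (j : A →ₗ⁅LaurentPolynomial k⁆ Lg) (hj : Function.Injective j)
    -- the embedding ℓ = ι ∘ j of A into L̂(𝔤,σ)
    (ℓ : A →ₗ[k] Lhat) (hℓ : ∀ a : A, ℓ a = ι (j a))
    -- the element x = x' + d with 0 ≠ x' ∈ A, with ad(x) k-diagonalizable on Â
    (x' : A) (x : Lhat) (hx : x = ℓ x' + d)
    -- a weight w of O_x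
    (w : k) :
    iSupIndep (fun n : ℤ =>
      weightSubmodule ℓ x c (w + (((m : ℤ) * n : ℤ) : k))) ∧
    (Submodule.span (LaurentPolynomial k)
        ((weightSubmodule ℓ x c w : Set A))).restrictScalars k =
      (⨆ n : ℤ, weightSubmodule ℓ x c (w + (((m : ℤ) * n : ℤ) : k))) ∧
    Function.Injective (nuMap k A (weightSubmodule ℓ x c w)) ∧
    LinearMap.range (nuMap k A (weightSubmodule ℓ x c w)) =
      (Submodule.span (LaurentPolynomial k)
        ((weightSubmodule ℓ x c w : Set A))).restrictScalars k := by
  have hι : Function.Injective ((k ∙ c).mkQ ∘ₗ ι) :=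
    Submodule.injective_mkQ_span_singleton_comp fun l a h ↦ (huniq l a 0 (by simpa using h)).1
  have hℓ_inj : Function.Injective ((k ∙ c).mkQ ∘ₗ ℓ) :=
    fun a b hab ↦ hj (hι (by simpa only [LinearMap.comp_apply, hℓ] using hab))
  have hshift (n : ℤ) (v : k) (y : A) (hy : y ∈ weightSubmodule ℓ x c v) :
      (T n : k[T;T⁻¹]) • y ∈ weightSubmodule ℓ x c (v + ((m * n : ℤ) : k)) := by
    simp only [mem_weightSubmodule_iff, hx, hℓ, map_smul] at hy ⊢
    exact mkQ_lie_T_smul hι (mkQ_lie_iota_eq hu_span hu_bracket hbr)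
      (exists_lie_d_iota_eq hζ.pow_eq_one hu_t hu_span hd) hy n
  set V : ℤ → Submodule k A := fun n ↦ weightSubmodule ℓ x c (w + (((m : ℤ) * n : ℤ) : k))
  have hV (i n : ℤ) (y : A) (hy : y ∈ V i) : (T n : k[T;T⁻¹]) • y ∈ V (i + n) := by
    simpa [V, mul_add, add_assoc] using hshift n _ y hy
  have hV0 : V 0 = weightSubmodule ℓ x c w := by simp [V]
  have hind : iSupIndep V :=
    (iSupIndep_weightSubmodule (by rw [← lie_skew, hc, neg_zero]) hℓ_inj).comp
      fun a b hab ↦ by simpa [hm.ne'] using hab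
  rw [← hV0]
  exact ⟨hind, span_restrictScalars_eq_iSup hV, nuMap_injective hV hind, range_nuMap _⟩

/-- For a weight `w` of `O_x`, the `R`-span `A_w·R` of `A_w` in `A` is
the direct sum `⊕_{n∈ℤ} A_{w+mn}`, and `ν : A_w ⊗_k R → A_w·R`, `y ⊗ tⁿ ↦ y·tⁿ`,
is bijective. -/
theorem span_of_weight_space
    -- the base field
    (k : Type) [Field k] [IsAlgClosed k] [CharZero k]
    -- the simple finite-dimensional Lie algebra 𝔤
    (𝔤 : Type) [LieRing 𝔤] [LieAlgebra k 𝔤] [FiniteDimensional k 𝔤]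
    [LieAlgebra.IsSimple k 𝔤]
    -- the order m of σ and a primitive m-th root of unity ζ
    (m : ℕ) (hm : 0 < m)
    (σ : 𝔤 ≃ₗ⁅k⁆ 𝔤) (hσ : ∀ y : 𝔤, (⇑σ)^[m] y = y)
    (ζ : k) (hζ : IsPrimitiveRoot ζ m)
    -- the twisted loop algebra L(𝔤,σ) = ⊕_{i∈ℤ} 𝔤_ī ⊗ sⁱ, an R-Lie algebra for
    -- R = k[t^{±1}] = LaurentPolynomial k (with t = sᵐ);
    -- `u p y` represents `y ⊗ sᵖ` for `y ∈ 𝔤_p̄`, i.e. `σ y = ζ^p • y`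
    (Lg : Type) [LieRing Lg] [LieAlgebra (LaurentPolynomial k) Lg]
    [LieAlgebra k Lg] [IsScalarTower k (LaurentPolynomial k) Lg]
    (u : ℤ → 𝔤 →ₗ[k] Lg)
    (hu_bracket : ∀ (p q : ℤ) (y z : 𝔤), σ y = ζ ^ p • y → σ z = ζ ^ q • z →
      ⁅u p y, u q z⁆ = u (p + q) ⁅y, z⁆)
    (hu_t : ∀ (p : ℤ) (y : 𝔤), σ y = ζ ^ p • y →
      (T 1 : LaurentPolynomial k) • u p y = u (p + (m : ℤ)) y)
    (hu_span : ∀ l : Lg, ∃ f : ℤ →₀ 𝔤, (∀ i, σ (f i) = ζ ^ i • f i) ∧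
      l = f.sum fun i yi => u i yi)
    (hu_ind : ∀ f : ℤ →₀ 𝔤, (∀ i, σ (f i) = ζ ^ i • f i) →
      (f.sum fun i yi => u i yi) = 0 → f = 0)
    -- the twisted affine Kac–Moody algebra L̂(𝔤,σ) = L(𝔤,σ) ⊕ kc ⊕ kd
    (Lhat : Type) [LieRing Lhat] [LieAlgebra k Lhat]
    (c d : Lhat) (ι : Lg →ₗ[k] Lhat)
    (hc : ∀ z : Lhat, ⁅c, z⁆ = 0)
    (hd : ∀ (p : ℤ) (y : 𝔤), σ y = ζ ^ p • y →
      ⁅d, ι (u p y)⁆ = (p : k) • ι (u p y))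
    (hbr : ∀ (p q : ℤ) (y z : 𝔤), σ y = ζ ^ p • y → σ z = ζ ^ q • z →
      ⁅ι (u p y), ι (u q z)⁆ =
        ι (u (p + q) ⁅y, z⁆) +
          (if p + q = 0 then (p : k) * killingForm k 𝔤 y z else 0) • c)
    (hdec : ∀ z : Lhat, ∃ (l : Lg) (a b : k), z = ι l + a • c + b • d)
    (huniq : ∀ (l : Lg) (a b : k), ι l + a • c + b • d = 0 → l = 0 ∧ a = 0 ∧ b = 0)
    -- the invariant nondegenerate bilinear form (·,·) on L̂(𝔤,σ)
    (B : LinearMap.BilinForm k Lhat)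
    (hBsymm : ∀ z w : Lhat, B z w = B w z)
    (hBinv : ∀ z w y : Lhat, B ⁅z, w⁆ y = B z ⁅w, y⁆)
    (hBval : ∀ (p q : ℤ) (y z : 𝔤), σ y = ζ ^ p • y → σ z = ζ ^ q • z →
      B (ι (u p y)) (ι (u q z)) = if p + q = 0 then killingForm k 𝔤 y z else 0)
    (hBc : ∀ l : Lg, B c (ι l) = 0) (hBd : ∀ l : Lg, B d (ι l) = 0)
    (hBcc : B c c = 0) (hBdd : B d d = 0) (hBcd : B c d = 1)
    -- the R-Lie subalgebra A of L(𝔤,σ), free of finite rank over R,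
    -- with A ⊗_R K semisimple over the fraction field K of R
    (A : Type) [LieRing A] [LieAlgebra (LaurentPolynomial k) A]
    [Module k A] [IsScalarTower k (LaurentPolynomial k) A]
    [Module.Free (LaurentPolynomial k) A] [Module.Finite (LaurentPolynomial k) A]
    (hss : LieAlgebra.IsSemisimple (FractionRing (LaurentPolynomial k))
      (FractionRing (LaurentPolynomial k) ⊗[LaurentPolynomial k] A))
    (j : A →ₗ⁅LaurentPolynomial k⁆ Lg) (hj : Function.Injective j)
    -- the embedding ℓ = ι ∘ j of A into L̂(𝔤,σ)
    (ℓ : A →ₗ[k] Lhat) (hℓ : ∀ a : A, ℓ a = ι (j a))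
    -- Â = A ⊕ kc ⊕ kd, a subalgebra of L̂(𝔤,σ) on which the form is nondegenerate
    (Ahat : Submodule k Lhat)
    (hAhat : Ahat = LinearMap.range ℓ ⊔ Submodule.span k {c} ⊔ Submodule.span k {d})
    (hA_closed : ∀ z ∈ Ahat, ∀ w ∈ Ahat, ⁅z, w⁆ ∈ Ahat)
    (hBnd : ∀ z ∈ Ahat, (∀ w ∈ Ahat, B z w = 0) → z = 0)
    -- the element x = x' + d with 0 ≠ x' ∈ A, with ad(x) k-diagonalizable on Â
    (x' : A) (hx'0 : x' ≠ 0) (x : Lhat) (hx : x = ℓ x' + d)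
    (hdiag : ∀ z ∈ Ahat, z ∈ ⨆ w : k,
      Ahat ⊓ Module.End.eigenspace (LieAlgebra.ad k Lhat x) w)
    -- a weight w of O_x
    (w : k) (hwweight : weightSubmodule ℓ x c w ≠ ⊥) :
    iSupIndep (fun n : ℤ =>
      weightSubmodule ℓ x c (w + (((m : ℤ) * n : ℤ) : k))) ∧
    (Submodule.span (LaurentPolynomial k)
        ((weightSubmodule ℓ x c w : Set A))).restrictScalars k =
      (⨆ n : ℤ, weightSubmodule ℓ x c (w + (((m : ℤ) * n : ℤ) : k))) ∧
    Function.Injective (nuMap k A (weightSubmodule ℓ x c w)) ∧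
    LinearMap.range (nuMap k A (weightSubmodule ℓ x c w)) =
      (Submodule.span (LaurentPolynomial k)
        ((weightSubmodule ℓ x c w : Set A))).restrictScalars k :=
  span_of_weight_space_general k 𝔤 m hm σ ζ hζ Lg u hu_bracket hu_t hu_span Lhat c d ι hc hd hbr
    huniq A j hj ℓ hℓ x' x hx w
end
end

section
/- In the setup below: (a) for every nonzero eigenvalue w of ad(x), the eigenspace Â_w is contained in Ã = A ⊕ kc; (b) the zero eigenspace decomposes as Â₀ = Ã₀ ⊕ k·x, where Ã₀ = Ã ∩ Â₀. -/
/-!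
Every bracket in `L̂ = L ⊕ kc ⊕ kd` lies in `L ⊕ kc`: brackets of homogeneous loops are loops
plus a multiple of `c`, `d` acts diagonally on homogeneous loops and `c` is central. So for
`w ≠ 0` an eigenvector `z = w⁻¹ [x, z]` of `ad x` lies in `L ⊕ kc`. The functional `(c, ·)`
vanishes on `L ⊕ kc` and equals `1` at `d` and at `x = x' + d`; hence `Â ∩ (L ⊕ kc) = Ã`, and
`Â = Ã ⊕ kx` with `[x, x] = 0`, which by the modular law gives `Â₀ = Ã₀ ⊕ kx`.
-/

namespace Submodule

theorem lie_mem_of_mem_span {R L : Type*} [CommRing R] [LieRing L] [LieAlgebra R L]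
    {S : Set L} {N : Submodule R L} (h : ∀ a ∈ S, ∀ b ∈ S, ⁅a, b⁆ ∈ N) {a b : L}
    (ha : a ∈ span R S) (hb : b ∈ span R S) : ⁅a, b⁆ ∈ N := by
  have hab := apply_mem_map₂ (LieModule.toEnd R L L : L →ₗ[R] Module.End R L) ha hb
  rw [map₂_span_span] at hab
  refine span_le.2 ?_ hab
  rintro _ ⟨a, ha, b, hb, rfl⟩
  exact h a ha b hb

theorem sup_span_singleton_le_of_sub_mem {R M : Type*} [Ring R] [AddCommGroup M] [Module R M]
    {N : Submodule R M} {a b : M} (h : a - b ∈ N) : N ⊔ R ∙ a ≤ N ⊔ R ∙ b := by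
  refine sup_le le_sup_left ((span_singleton_le_iff_mem _ _).2 ?_)
  rw [← sub_add_cancel a b]
  exact add_mem_sup h (mem_span_singleton_self b)

theorem sup_span_singleton_eq_of_sub_mem {R M : Type*} [Ring R] [AddCommGroup M] [Module R M]
    {N : Submodule R M} {a b : M} (h : a - b ∈ N) : N ⊔ R ∙ a = N ⊔ R ∙ b :=
  (sup_span_singleton_le_of_sub_mem h).antisymm
    (sup_span_singleton_le_of_sub_mem (by rw [← neg_sub]; exact N.neg_mem h))

theorem sup_span_singleton_inf_eq_of_notMem {K V : Type*} [DivisionRing K] [AddCommGroup V]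
    [Module K V] {N M : Submodule K V} {v : V} (hNM : N ≤ M) (hv : v ∉ M) :
    (N ⊔ K ∙ v) ⊓ M = N := by
  rw [sup_inf_assoc_of_le _ hNM, inf_comm, (disjoint_span_singleton_of_notMem hv).eq_bot,
    sup_bot_eq]

end Submodule

open Submodule

section Homogeneous

variable {k 𝔤 Lg : Type*} [Field k] [AddCommGroup 𝔤] [Module k 𝔤] [AddCommGroup Lg] [Module k Lg]
  {σ : 𝔤 → 𝔤} {ζ : k} {u : ℤ → 𝔤 →ₗ[k] Lg}

variable (σ ζ u) in
def homogeneousElements : Set Lg :=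
  {l | ∃ p y, σ y = ζ ^ p • y ∧ u p y = l}

theorem span_homogeneousElements
    (hu_span : ∀ l : Lg, ∃ f : ℤ →₀ 𝔤, (∀ i, σ (f i) = ζ ^ i • f i) ∧
      l = f.sum fun i yi => u i yi) :
    span k (homogeneousElements σ ζ u) = ⊤ := by
  refine eq_top_iff.2 fun l _ => ?_
  obtain ⟨f, hf, rfl⟩ := hu_span l
  exact sum_mem fun i _ => subset_span ⟨i, f i, hf i, rfl⟩

end Homogeneous

theorem lie_mem_range_sup_span_center {k 𝔤 Lg Lhat : Type*} [Field k] [LieRing 𝔤]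
    [LieAlgebra k 𝔤] [FiniteDimensional k 𝔤] [AddCommGroup Lg] [Module k Lg] [LieRing Lhat]
    [LieAlgebra k Lhat] {σ : 𝔤 → 𝔤} {ζ : k} {u : ℤ → 𝔤 →ₗ[k] Lg} {c d : Lhat} {ι : Lg →ₗ[k] Lhat}
    (hu_span : ∀ l : Lg, ∃ f : ℤ →₀ 𝔤, (∀ i, σ (f i) = ζ ^ i • f i) ∧
      l = f.sum fun i yi => u i yi)
    (hc : ∀ z : Lhat, ⁅c, z⁆ = 0)
    (hd : ∀ (p : ℤ) (y : 𝔤), σ y = ζ ^ p • y →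
      ⁅d, ι (u p y)⁆ = (p : k) • ι (u p y))
    (hbr : ∀ (p q : ℤ) (y z : 𝔤), σ y = ζ ^ p • y → σ z = ζ ^ q • z →
      ⁅ι (u p y), ι (u q z)⁆ =
        ι (u (p + q) ⁅y, z⁆) +
          (if p + q = 0 then (p : k) * killingForm k 𝔤 y z else 0) • c)
    {a b : Lhat} (ha : a ∈ LinearMap.range ι ⊔ k ∙ c ⊔ k ∙ d)
    (hb : b ∈ LinearMap.range ι ⊔ k ∙ c ⊔ k ∙ d) :
    ⁅a, b⁆ ∈ LinearMap.range ι ⊔ k ∙ c := by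
  have hspan : LinearMap.range ι ⊔ k ∙ c ⊔ k ∙ d =
      span k (ι '' homogeneousElements σ ζ u ∪ {c} ∪ {d}) := by
    rw [span_union, span_union, span_image, span_homogeneousElements hu_span, Submodule.map_top]
  rw [hspan] at ha hb
  have hι : ∀ l, ι l ∈ LinearMap.range ι ⊔ k ∙ c := fun l => mem_sup_left ⟨l, rfl⟩
  have hcM : c ∈ LinearMap.range ι ⊔ k ∙ c := mem_sup_right (mem_span_singleton_self c)
  refine lie_mem_of_mem_span ?_ ha hb
  rintro a ((⟨_, ⟨p, y, hy, rfl⟩, rfl⟩ | rfl) | rfl) b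
    ((⟨_, ⟨q, z, hz, rfl⟩, rfl⟩ | rfl) | rfl)
  · rw [hbr p q y z hy hz]
    exact add_mem (hι _) (smul_mem _ _ hcM)
  · rw [← lie_skew, hc, neg_zero]
    exact zero_mem _
  · rw [← lie_skew, hd p y hy]
    exact neg_mem (smul_mem _ _ (hι _))
  all_goals first
    | rw [hc]; exact zero_mem _
    | rw [← lie_skew, hc, neg_zero]; exact zero_mem _
    | rw [hd q z hz]; exact smul_mem _ _ (hι _)
    | rw [lie_self]; exact zero_mem _

open LaurentPolynomial TensorProduct

theorem eigenspace_location_general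
    -- the base field
    (k : Type) [Field k]
    -- the simple finite-dimensional Lie algebra 𝔤
    (𝔤 : Type) [LieRing 𝔤] [LieAlgebra k 𝔤] [FiniteDimensional k 𝔤]
    (σ : 𝔤 ≃ₗ⁅k⁆ 𝔤)
    (ζ : k)
    -- the twisted loop algebra L(𝔤,σ) = ⊕_{i∈ℤ} 𝔤_ī ⊗ sⁱ, an R-Lie algebra for
    -- R = k[t^{±1}] = LaurentPolynomial k (with t = sᵐ);
    -- `u p y` represents `y ⊗ sᵖ` for `y ∈ 𝔤_p̄`, i.e. `σ y = ζ^p • y`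
    (Lg : Type) [LieRing Lg] [LieAlgebra (LaurentPolynomial k) Lg]
    [LieAlgebra k Lg]
    (u : ℤ → 𝔤 →ₗ[k] Lg)
    (hu_span : ∀ l : Lg, ∃ f : ℤ →₀ 𝔤, (∀ i, σ (f i) = ζ ^ i • f i) ∧
      l = f.sum fun i yi => u i yi)
    -- the twisted affine Kac–Moody algebra L̂(𝔤,σ) = L(𝔤,σ) ⊕ kc ⊕ kd
    (Lhat : Type) [LieRing Lhat] [LieAlgebra k Lhat]
    (c d : Lhat) (ι : Lg →ₗ[k] Lhat)
    (hc : ∀ z : Lhat, ⁅c, z⁆ = 0)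
    (hd : ∀ (p : ℤ) (y : 𝔤), σ y = ζ ^ p • y →
      ⁅d, ι (u p y)⁆ = (p : k) • ι (u p y))
    (hbr : ∀ (p q : ℤ) (y z : 𝔤), σ y = ζ ^ p • y → σ z = ζ ^ q • z →
      ⁅ι (u p y), ι (u q z)⁆ =
        ι (u (p + q) ⁅y, z⁆) +
          (if p + q = 0 then (p : k) * killingForm k 𝔤 y z else 0) • c)
    -- the invariant nondegenerate bilinear form (·,·) on L̂(𝔤,σ)
    (B : LinearMap.BilinForm k Lhat)
    (hBc : ∀ l : Lg, B c (ι l) = 0)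
    (hBcc : B c c = 0) (hBcd : B c d = 1)
    -- the R-Lie subalgebra A of L(𝔤,σ), free of finite rank over R,
    (A : Type) [LieRing A] [LieAlgebra (LaurentPolynomial k) A]
    [Module k A]
    (j : A →ₗ⁅LaurentPolynomial k⁆ Lg)
    -- the embedding ℓ = ι ∘ j of A into L̂(𝔤,σ)
    (ℓ : A →ₗ[k] Lhat) (hℓ : ∀ a : A, ℓ a = ι (j a))
    -- Â = A ⊕ kc ⊕ kd, a subalgebra of L̂(𝔤,σ) on which the form is nondegenerate
    (Ahat : Submodule k Lhat)
    (hAhat : Ahat = LinearMap.range ℓ ⊔ Submodule.span k {c} ⊔ Submodule.span k {d})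
    -- the element x = x' + d with 0 ≠ x' ∈ A, with ad(x) k-diagonalizable on Â
    (x' : A) (x : Lhat) (hx : x = ℓ x' + d)
    :
    (∀ w : k, w ≠ 0 → ∀ z ∈ Ahat, ⁅x, z⁆ = w • z →
      z ∈ (LinearMap.range ℓ ⊔ Submodule.span k {c} : Submodule k Lhat)) ∧
    (Ahat ⊓ LinearMap.ker (LieAlgebra.ad k Lhat x) =
      ((LinearMap.range ℓ ⊔ Submodule.span k {c}) ⊓
        LinearMap.ker (LieAlgebra.ad k Lhat x)) ⊔ Submodule.span k {x}) ∧
    (((LinearMap.range ℓ ⊔ Submodule.span k {c}) ⊓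
        LinearMap.ker (LieAlgebra.ad k Lhat x)) ⊓ Submodule.span k {x} = ⊥) := by
  have hA_le : LinearMap.range ℓ ⊔ k ∙ c ≤ LinearMap.range ι ⊔ k ∙ c :=
    sup_le_sup_right (by rintro _ ⟨a, rfl⟩; exact ⟨j a, (hℓ a).symm⟩) _
  have hBc_vanish : LinearMap.range ι ⊔ k ∙ c ≤ LinearMap.ker (B c) :=
    sup_le (by rintro _ ⟨l, rfl⟩; exact hBc l) ((span_singleton_le_iff_mem _ _).2 hBcc)
  have hnotMem : ∀ v, B c v = 1 → v ∉ LinearMap.range ι ⊔ k ∙ c := fun v hv h =>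
    one_ne_zero (hv.symm.trans (LinearMap.mem_ker.1 (hBc_vanish h)))
  have hBcx : B c x = 1 := by rw [hx, map_add, hℓ, hBc, hBcd, zero_add]
  have hxd : x - d ∈ LinearMap.range ℓ ⊔ k ∙ c := by
    rw [hx, add_sub_cancel_right]
    exact mem_sup_left ⟨x', rfl⟩
  have hAhat_x : Ahat = LinearMap.range ℓ ⊔ k ∙ c ⊔ k ∙ x := by
    rw [hAhat, sup_span_singleton_eq_of_sub_mem hxd]
  have hxker : x ∈ LinearMap.ker (LieAlgebra.ad k Lhat x) := lie_self x
  refine ⟨fun w hw z hz hxz => ?_, ?_, ?_⟩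
  · have hAhat_le : Ahat ≤ LinearMap.range ι ⊔ k ∙ c ⊔ k ∙ d := hAhat ▸ sup_le_sup_right hA_le _
    have hx_mem : x ∈ Ahat := hAhat_x ▸ mem_sup_right (mem_span_singleton_self x)
    have hz_mem : z ∈ LinearMap.range ι ⊔ k ∙ c := (smul_mem_iff _ hw).1 <|
      hxz ▸ lie_mem_range_sup_span_center hu_span hc hd hbr (hAhat_le hx_mem) (hAhat_le hz)
    rw [← sup_span_singleton_inf_eq_of_notMem hA_le (hnotMem d hBcd), ← hAhat]
    exact ⟨hz, hz_mem⟩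
  · rw [hAhat_x, sup_comm, sup_inf_assoc_of_le _ ((span_singleton_le_iff_mem _ _).2 hxker),
      sup_comm]
  · exact (disjoint_span_singleton_of_notMem fun h =>
      hnotMem x hBcx (hA_le (mem_inf.1 h).1)).eq_bot

/-- (a) Every eigenspace `Â_w` of `ad(x)` with `w ≠ 0` is contained in
`Ã = A ⊕ kc`; (b) the zero eigenspace decomposes as `Â₀ = Ã₀ ⊕ k·x`. -/
theorem eigenspace_location
    -- the base field
    (k : Type) [Field k] [IsAlgClosed k] [CharZero k]
    -- the simple finite-dimensional Lie algebra 𝔤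
    (𝔤 : Type) [LieRing 𝔤] [LieAlgebra k 𝔤] [FiniteDimensional k 𝔤]
    [LieAlgebra.IsSimple k 𝔤]
    -- the order m of σ and a primitive m-th root of unity ζ
    (m : ℕ) (hm : 0 < m)
    (σ : 𝔤 ≃ₗ⁅k⁆ 𝔤) (hσ : ∀ y : 𝔤, (⇑σ)^[m] y = y)
    (ζ : k) (hζ : IsPrimitiveRoot ζ m)
    -- the twisted loop algebra L(𝔤,σ) = ⊕_{i∈ℤ} 𝔤_ī ⊗ sⁱ, an R-Lie algebra for
    -- R = k[t^{±1}] = LaurentPolynomial k (with t = sᵐ);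
    -- `u p y` represents `y ⊗ sᵖ` for `y ∈ 𝔤_p̄`, i.e. `σ y = ζ^p • y`
    (Lg : Type) [LieRing Lg] [LieAlgebra (LaurentPolynomial k) Lg]
    [LieAlgebra k Lg] [IsScalarTower k (LaurentPolynomial k) Lg]
    (u : ℤ → 𝔤 →ₗ[k] Lg)
    (hu_bracket : ∀ (p q : ℤ) (y z : 𝔤), σ y = ζ ^ p • y → σ z = ζ ^ q • z →
      ⁅u p y, u q z⁆ = u (p + q) ⁅y, z⁆)
    (hu_t : ∀ (p : ℤ) (y : 𝔤), σ y = ζ ^ p • y →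
      (T 1 : LaurentPolynomial k) • u p y = u (p + (m : ℤ)) y)
    (hu_span : ∀ l : Lg, ∃ f : ℤ →₀ 𝔤, (∀ i, σ (f i) = ζ ^ i • f i) ∧
      l = f.sum fun i yi => u i yi)
    (hu_ind : ∀ f : ℤ →₀ 𝔤, (∀ i, σ (f i) = ζ ^ i • f i) →
      (f.sum fun i yi => u i yi) = 0 → f = 0)
    -- the twisted affine Kac–Moody algebra L̂(𝔤,σ) = L(𝔤,σ) ⊕ kc ⊕ kd
    (Lhat : Type) [LieRing Lhat] [LieAlgebra k Lhat]
    (c d : Lhat) (ι : Lg →ₗ[k] Lhat)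
    (hc : ∀ z : Lhat, ⁅c, z⁆ = 0)
    (hd : ∀ (p : ℤ) (y : 𝔤), σ y = ζ ^ p • y →
      ⁅d, ι (u p y)⁆ = (p : k) • ι (u p y))
    (hbr : ∀ (p q : ℤ) (y z : 𝔤), σ y = ζ ^ p • y → σ z = ζ ^ q • z →
      ⁅ι (u p y), ι (u q z)⁆ =
        ι (u (p + q) ⁅y, z⁆) +
          (if p + q = 0 then (p : k) * killingForm k 𝔤 y z else 0) • c)
    (hdec : ∀ z : Lhat, ∃ (l : Lg) (a b : k), z = ι l + a • c + b • d)
    (huniq : ∀ (l : Lg) (a b : k), ι l + a • c + b • d = 0 → l = 0 ∧ a = 0 ∧ b = 0)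
    -- the invariant nondegenerate bilinear form (·,·) on L̂(𝔤,σ)
    (B : LinearMap.BilinForm k Lhat)
    (hBsymm : ∀ z w : Lhat, B z w = B w z)
    (hBinv : ∀ z w y : Lhat, B ⁅z, w⁆ y = B z ⁅w, y⁆)
    (hBval : ∀ (p q : ℤ) (y z : 𝔤), σ y = ζ ^ p • y → σ z = ζ ^ q • z →
      B (ι (u p y)) (ι (u q z)) = if p + q = 0 then killingForm k 𝔤 y z else 0)
    (hBc : ∀ l : Lg, B c (ι l) = 0) (hBd : ∀ l : Lg, B d (ι l) = 0)
    (hBcc : B c c = 0) (hBdd : B d d = 0) (hBcd : B c d = 1)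
    -- the R-Lie subalgebra A of L(𝔤,σ), free of finite rank over R,
    -- with A ⊗_R K semisimple over the fraction field K of R
    (A : Type) [LieRing A] [LieAlgebra (LaurentPolynomial k) A]
    [Module k A] [IsScalarTower k (LaurentPolynomial k) A]
    [Module.Free (LaurentPolynomial k) A] [Module.Finite (LaurentPolynomial k) A]
    (hss : LieAlgebra.IsSemisimple (FractionRing (LaurentPolynomial k))
      (FractionRing (LaurentPolynomial k) ⊗[LaurentPolynomial k] A))
    (j : A →ₗ⁅LaurentPolynomial k⁆ Lg) (hj : Function.Injective j)
    -- the embedding ℓ = ι ∘ j of A into L̂(𝔤,σ)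
    (ℓ : A →ₗ[k] Lhat) (hℓ : ∀ a : A, ℓ a = ι (j a))
    -- Â = A ⊕ kc ⊕ kd, a subalgebra of L̂(𝔤,σ) on which the form is nondegenerate
    (Ahat : Submodule k Lhat)
    (hAhat : Ahat = LinearMap.range ℓ ⊔ Submodule.span k {c} ⊔ Submodule.span k {d})
    (hA_closed : ∀ z ∈ Ahat, ∀ w ∈ Ahat, ⁅z, w⁆ ∈ Ahat)
    (hBnd : ∀ z ∈ Ahat, (∀ w ∈ Ahat, B z w = 0) → z = 0)
    -- the element x = x' + d with 0 ≠ x' ∈ A, with ad(x) k-diagonalizable on Â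
    (x' : A) (hx'0 : x' ≠ 0) (x : Lhat) (hx : x = ℓ x' + d)
    (hdiag : ∀ z ∈ Ahat, z ∈ ⨆ w : k,
      Ahat ⊓ Module.End.eigenspace (LieAlgebra.ad k Lhat x) w)
    :
    (∀ w : k, w ≠ 0 → ∀ z ∈ Ahat, ⁅x, z⁆ = w • z →
      z ∈ (LinearMap.range ℓ ⊔ Submodule.span k {c} : Submodule k Lhat)) ∧
    (Ahat ⊓ LinearMap.ker (LieAlgebra.ad k Lhat x) =
      ((LinearMap.range ℓ ⊔ Submodule.span k {c}) ⊓
        LinearMap.ker (LieAlgebra.ad k Lhat x)) ⊔ Submodule.span k {x}) ∧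
    (((LinearMap.range ℓ ⊔ Submodule.span k {c}) ⊓
        LinearMap.ker (LieAlgebra.ad k Lhat x)) ⊓ Submodule.span k {x} = ⊥) :=
  eigenspace_location_general k 𝔤 σ ζ Lg u hu_span Lhat c d ι hc hd hbr B hBc hBcc hBcd A j ℓ hℓ
    Ahat hAhat x' x hx
end

section
/- In the setup below, if y ∈ L₀ is nonzero and the adjoint operator ad(y): L(𝔤,σ) → L(𝔤,σ) is k-diagonalizable, then ad(y): L̂(𝔤,σ) → L̂(𝔤,σ) is also k-diagonalizable (L̂(𝔤,σ) has a k-basis consisting of eigenvectors of ad(y)). -/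
open LaurentPolynomial TensorProduct

noncomputable section

/-!
Modulo the central line `k c`, the operator `ad (ι y)` restricted to `ι L(𝔤,σ)` is `ad y`, so
an eigenvector `l` of `ad y` lifts to the eigenvector `ι l - f (ι l) • c` of `ad (ι y)` as soon
as there is a functional `f` with `f c = 1` that vanishes on the range of `ad (ι y)`.
The functional `f = (x, ·)` works: by invariance `(x, [ι y, v]) = ([x, ι y], v)`, and
`[x, ι y] = μ c` with `μ = (x, [x, ι y]) = ([x, x], ι y) = 0`. These lifts, together with `c`
and `x = ι x' + d`, which `ad (ι y)` kills, span `L̂(𝔤,σ)`.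
-/

namespace Module.End

variable {k V M : Type*} [CommRing k] [AddCommGroup V] [Module k V] [AddCommGroup M] [Module k M]
  {D : Module.End k V} {T : Module.End k M} {ι : M →ₗ[k] V} {c : V} {f : V →ₗ[k] k}

lemma mem_iSup_eigenspace_of_apply_eq_zero {v : V} (hv : D v = 0) :
    v ∈ ⨆ w, D.eigenspace w :=
  Submodule.mem_iSup_of_mem 0 (by rwa [eigenspace_zero, LinearMap.mem_ker])

lemma sub_smul_mem_eigenspace_of_lift (hDc : D c = 0) (hfc : f c = 1) (hfD : ∀ v, f (D v) = 0)
    (hι : ∀ l, ∃ γ : k, D (ι l) = ι (T l) + γ • c) {w : k} {l : M} (hl : T l = w • l) :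
    ι l - f (ι l) • c ∈ D.eigenspace w := by
  obtain ⟨γ, hγ⟩ := hι l
  rw [hl, map_smul] at hγ
  have hγf : γ = -(w * f (ι l)) := by
    have := hfD (ι l)
    rw [hγ, map_add, map_smul, map_smul, hfc, smul_eq_mul, smul_eq_mul, mul_one] at this
    linear_combination this
  rw [mem_eigenspace_iff, map_sub, map_smul, hDc, smul_zero, sub_zero, hγ, hγf]
  module

lemma range_le_iSup_eigenspace_of_lift (hDc : D c = 0) (hfc : f c = 1)
    (hfD : ∀ v, f (D v) = 0) (hι : ∀ l, ∃ γ : k, D (ι l) = ι (T l) + γ • c)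
    (hT : ⨆ w, T.eigenspace w = ⊤) :
    LinearMap.range ι ≤ ⨆ w, D.eigenspace w := by
  set φ : M →ₗ[k] V := ι - (f ∘ₗ ι).smulRight c
  have hφ : ⊤ ≤ (⨆ w, D.eigenspace w).comap φ := by
    rw [← hT]
    exact iSup_le fun w l hl => Submodule.mem_iSup_of_mem w
      (sub_smul_mem_eigenspace_of_lift hDc hfc hfD hι (mem_eigenspace_iff.1 hl))
  rintro _ ⟨l, rfl⟩
  have hl : ι l = φ l + f (ι l) • c := by simp [φ]
  rw [hl]
  exact add_mem (hφ trivial) (Submodule.smul_mem _ _ (mem_iSup_eigenspace_of_apply_eq_zero hDc))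

end Module.End

lemma LinearMap.lie_sub_map_lie_mem_of_span_eq_top {k M L : Type*} [CommRing k] [LieRing M]
    [LieAlgebra k M] [LieRing L] [LieAlgebra k L] (ι : M →ₗ[k] L) {S : Submodule k L}
    {G : Set M} (hG : Submodule.span k G = ⊤)
    (h : ∀ g ∈ G, ∀ g' ∈ G, ⁅ι g, ι g'⁆ - ι ⁅g, g'⁆ ∈ S) (a b : M) :
    ⁅ι a, ι b⁆ - ι ⁅a, b⁆ ∈ S := by
  let β : M →ₗ[k] M →ₗ[k] L :=
    LinearMap.mk₂ k (fun a b => ⁅ι a, ι b⁆ - ι ⁅a, b⁆)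
    (fun _ _ _ => by simp only [map_add, add_lie]; abel)
    (fun _ _ _ => by simp only [map_smul, smul_lie, smul_sub])
    (fun _ _ _ => by simp only [map_add, lie_add]; abel)
    (fun _ _ _ => by simp only [map_smul, lie_smul, smul_sub])
  have hβ : Submodule.map₂ β ⊤ ⊤ ≤ S := by
    rw [← hG, Submodule.map₂_span_span, Submodule.span_le]
    rintro _ ⟨g, hg, g', hg', rfl⟩
    exact h g hg g' hg'
  exact hβ (Submodule.apply_mem_map₂ β trivial trivial)

lemma Submodule.span_setOf_eq_top_of_forall_eq_finsuppSum {R M N ι : Type*} [Semiring R]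
    [AddCommMonoid M] [Module R M] [Zero N] {u : ι → N → M} {P : ι → N → Prop}
    (h : ∀ l : M, ∃ f : ι →₀ N, (∀ i, P i (f i)) ∧ l = f.sum fun i n => u i n) :
    span R {l | ∃ i n, P i n ∧ u i n = l} = ⊤ := by
  refine eq_top_iff'.2 fun l => ?_
  obtain ⟨f, hf, rfl⟩ := h l
  exact Submodule.finsuppSum_mem _ _ _ _ fun i _ => subset_span ⟨i, f i, hf i, rfl⟩

theorem diagonalizable_extends_to_affine_general
    -- the base field
    (k : Type) [Field k]
    -- the simple finite-dimensional Lie algebra 𝔤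
    (𝔤 : Type) [LieRing 𝔤] [LieAlgebra k 𝔤] [FiniteDimensional k 𝔤]
    -- the order m of σ and a primitive m-th root of unity ζ
    (σ : 𝔤 ≃ₗ⁅k⁆ 𝔤) (ζ : k)
    -- the twisted loop algebra L(𝔤,σ) = ⊕_{i∈ℤ} 𝔤_ī ⊗ sⁱ, an R-Lie algebra for
    -- R = k[t^{±1}] = LaurentPolynomial k (with t = sᵐ);
    -- `u p y` represents `y ⊗ sᵖ` for `y ∈ 𝔤_p̄`, i.e. `σ y = ζ^p • y`
    (Lg : Type) [LieRing Lg] [LieAlgebra k Lg]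
    (u : ℤ → 𝔤 →ₗ[k] Lg)
    (hu_bracket : ∀ (p q : ℤ) (y z : 𝔤), σ y = ζ ^ p • y → σ z = ζ ^ q • z →
      ⁅u p y, u q z⁆ = u (p + q) ⁅y, z⁆)
    (hu_span : ∀ l : Lg, ∃ f : ℤ →₀ 𝔤, (∀ i, σ (f i) = ζ ^ i • f i) ∧
      l = f.sum fun i yi => u i yi)
    -- the twisted affine Kac–Moody algebra L̂(𝔤,σ) = L(𝔤,σ) ⊕ kc ⊕ kd
    (Lhat : Type) [LieRing Lhat] [LieAlgebra k Lhat]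
    (c d : Lhat) (ι : Lg →ₗ[k] Lhat)
    (hc : ∀ z : Lhat, ⁅c, z⁆ = 0)
    (hbr : ∀ (p q : ℤ) (y z : 𝔤), σ y = ζ ^ p • y → σ z = ζ ^ q • z →
      ⁅ι (u p y), ι (u q z)⁆ =
        ι (u (p + q) ⁅y, z⁆) +
          (if p + q = 0 then (p : k) * killingForm k 𝔤 y z else 0) • c)
    (hdec : ∀ z : Lhat, ∃ (l : Lg) (a b : k), z = ι l + a • c + b • d)
    -- the invariant nondegenerate bilinear form (·,·) on L̂(𝔤,σ)
    (B : LinearMap.BilinForm k Lhat)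
    (hBsymm : ∀ z w : Lhat, B z w = B w z)
    (hBinv : ∀ z w y : Lhat, B ⁅z, w⁆ y = B z ⁅w, y⁆)
    (hBc : ∀ l : Lg, B c (ι l) = 0) (hBcd : B c d = 1)
    -- the element x = x' + d with ad(x) k-diagonalizable on L̂(𝔤,σ)
    (x' : Lg) (x : Lhat) (hx : x = ι x' + d)
    -- a nonzero element y of L₀ whose adjoint operator is diagonalizable on L(𝔤,σ)
    (y : Lg)
    (hyL0 : ∃ μ : k, ⁅x, ι y⁆ = μ • c)
    (hydiag : (⨆ w : k, Module.End.eigenspace (LieAlgebra.ad k Lg y) w) = ⊤) :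
    (⨆ w : k, Module.End.eigenspace (LieAlgebra.ad k Lhat (ι y)) w) = ⊤ := by
  obtain ⟨μ, hμ⟩ := hyL0
  have hspan : Submodule.span k {l | ∃ p z, σ z = ζ ^ p • z ∧ u p z = l} = ⊤ :=
    Submodule.span_setOf_eq_top_of_forall_eq_finsuppSum hu_span
  have hlift : ∀ a b : Lg, ∃ γ : k, ⁅ι a, ι b⁆ = ι ⁅a, b⁆ + γ • c := by
    intro a b
    obtain ⟨γ, hγ⟩ := Submodule.mem_span_singleton.1 <|
      ι.lie_sub_map_lie_mem_of_span_eq_top hspan (by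
        rintro _ ⟨p, z, hz, rfl⟩ _ ⟨q, z', hz', rfl⟩
        rw [hu_bracket p q z z' hz hz', hbr p q z z' hz hz', add_sub_cancel_left]
        exact Submodule.smul_mem _ _ (Submodule.mem_span_singleton_self c)) a b
    exact ⟨γ, by rw [hγ]; abel⟩
  have hxc : B x c = 1 := by rw [hBsymm, hx, map_add, hBc, hBcd, zero_add]
  have hxy : ⁅x, ι y⁆ = 0 := by
    have hBxxy : B x ⁅x, ι y⁆ = 0 := by rw [← hBinv, lie_self, map_zero, LinearMap.zero_apply]
    rw [hμ, map_smul, hxc, smul_eq_mul, mul_one] at hBxxy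
    rw [hμ, hBxxy, zero_smul]
  set D := LieAlgebra.ad k Lhat (ι y)
  have hDc : D c = 0 := by rw [LieAlgebra.ad_apply, ← lie_skew, hc, neg_zero]
  have hDx : D x = 0 := by rw [LieAlgebra.ad_apply, ← lie_skew, hxy, neg_zero]
  have hrange := Module.End.range_le_iSup_eigenspace_of_lift hDc hxc
    (fun v => by rw [LieAlgebra.ad_apply, ← hBinv, hxy, map_zero, LinearMap.zero_apply])
    (hlift y) hydiag
  have hcE := Module.End.mem_iSup_eigenspace_of_apply_eq_zero hDc
  have hxE := Module.End.mem_iSup_eigenspace_of_apply_eq_zero hDx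
  refine Submodule.eq_top_iff'.2 fun z => ?_
  obtain ⟨l, a, b, rfl⟩ := hdec z
  rw [show d = x - ι x' by rw [hx]; abel]
  exact add_mem (add_mem (hrange ⟨l, rfl⟩) (Submodule.smul_mem _ _ hcE))
    (Submodule.smul_mem _ _ (sub_mem hxE (hrange ⟨x', rfl⟩)))

/-- If `y ∈ L₀` is nonzero and `ad(y)` is `k`-diagonalizable on
`L(𝔤,σ)`, then `ad(y)` is `k`-diagonalizable on all of `L̂(𝔤,σ)`. -/
theorem diagonalizable_extends_to_affine
    -- the base field
    (k : Type) [Field k] [IsAlgClosed k] [CharZero k]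
    -- the simple finite-dimensional Lie algebra 𝔤
    (𝔤 : Type) [LieRing 𝔤] [LieAlgebra k 𝔤] [FiniteDimensional k 𝔤]
    [LieAlgebra.IsSimple k 𝔤]
    -- the order m of σ and a primitive m-th root of unity ζ
    (m : ℕ) (hm : 0 < m)
    (σ : 𝔤 ≃ₗ⁅k⁆ 𝔤) (hσ : ∀ y : 𝔤, (⇑σ)^[m] y = y)
    (ζ : k) (hζ : IsPrimitiveRoot ζ m)
    -- the twisted loop algebra L(𝔤,σ) = ⊕_{i∈ℤ} 𝔤_ī ⊗ sⁱ, an R-Lie algebra for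
    -- R = k[t^{±1}] = LaurentPolynomial k (with t = sᵐ);
    -- `u p y` represents `y ⊗ sᵖ` for `y ∈ 𝔤_p̄`, i.e. `σ y = ζ^p • y`
    (Lg : Type) [LieRing Lg] [LieAlgebra (LaurentPolynomial k) Lg]
    [LieAlgebra k Lg] [IsScalarTower k (LaurentPolynomial k) Lg]
    (u : ℤ → 𝔤 →ₗ[k] Lg)
    (hu_bracket : ∀ (p q : ℤ) (y z : 𝔤), σ y = ζ ^ p • y → σ z = ζ ^ q • z →
      ⁅u p y, u q z⁆ = u (p + q) ⁅y, z⁆)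
    (hu_t : ∀ (p : ℤ) (y : 𝔤), σ y = ζ ^ p • y →
      (T 1 : LaurentPolynomial k) • u p y = u (p + (m : ℤ)) y)
    (hu_span : ∀ l : Lg, ∃ f : ℤ →₀ 𝔤, (∀ i, σ (f i) = ζ ^ i • f i) ∧
      l = f.sum fun i yi => u i yi)
    (hu_ind : ∀ f : ℤ →₀ 𝔤, (∀ i, σ (f i) = ζ ^ i • f i) →
      (f.sum fun i yi => u i yi) = 0 → f = 0)
    -- the twisted affine Kac–Moody algebra L̂(𝔤,σ) = L(𝔤,σ) ⊕ kc ⊕ kd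
    (Lhat : Type) [LieRing Lhat] [LieAlgebra k Lhat]
    (c d : Lhat) (ι : Lg →ₗ[k] Lhat)
    (hc : ∀ z : Lhat, ⁅c, z⁆ = 0)
    (hd : ∀ (p : ℤ) (y : 𝔤), σ y = ζ ^ p • y →
      ⁅d, ι (u p y)⁆ = (p : k) • ι (u p y))
    (hbr : ∀ (p q : ℤ) (y z : 𝔤), σ y = ζ ^ p • y → σ z = ζ ^ q • z →
      ⁅ι (u p y), ι (u q z)⁆ =
        ι (u (p + q) ⁅y, z⁆) +
          (if p + q = 0 then (p : k) * killingForm k 𝔤 y z else 0) • c)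
    (hdec : ∀ z : Lhat, ∃ (l : Lg) (a b : k), z = ι l + a • c + b • d)
    (huniq : ∀ (l : Lg) (a b : k), ι l + a • c + b • d = 0 → l = 0 ∧ a = 0 ∧ b = 0)
    -- the invariant nondegenerate bilinear form (·,·) on L̂(𝔤,σ)
    (B : LinearMap.BilinForm k Lhat)
    (hBsymm : ∀ z w : Lhat, B z w = B w z)
    (hBinv : ∀ z w y : Lhat, B ⁅z, w⁆ y = B z ⁅w, y⁆)
    (hBval : ∀ (p q : ℤ) (y z : 𝔤), σ y = ζ ^ p • y → σ z = ζ ^ q • z →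
      B (ι (u p y)) (ι (u q z)) = if p + q = 0 then killingForm k 𝔤 y z else 0)
    (hBc : ∀ l : Lg, B c (ι l) = 0) (hBd : ∀ l : Lg, B d (ι l) = 0)
    (hBcc : B c c = 0) (hBdd : B d d = 0) (hBcd : B c d = 1)
    -- the element x = x' + d with ad(x) k-diagonalizable on L̂(𝔤,σ)
    (x' : Lg) (x : Lhat) (hx : x = ι x' + d)
    (hxdiag : (⨆ w : k, Module.End.eigenspace (LieAlgebra.ad k Lhat x) w) = ⊤)
    -- a nonzero element y of L₀ whose adjoint operator is diagonalizable on L(𝔤,σ)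
    (y : Lg) (hy0 : y ≠ 0)
    (hyL0 : ∃ μ : k, ⁅x, ι y⁆ = μ • c)
    (hydiag : (⨆ w : k, Module.End.eigenspace (LieAlgebra.ad k Lg y) w) = ⊤) :
    (⨆ w : k, Module.End.eigenspace (LieAlgebra.ad k Lhat (ι y)) w) = ⊤ :=
  diagonalizable_extends_to_affine_general k 𝔤 σ ζ Lg u hu_bracket hu_span Lhat c d ι hc hbr hdec B
    hBsymm hBinv hBc hBcd x' x hx y hyL0 hydiag
end
end

section
/- The kernel of the restriction homomorphism τ: Aut_{k-Lie}(L̂(𝔤)_S) → Aut_{k-Lie}(L̃(𝔤)_S) is isomorphic to the additive group Hom_k(kd, kc) ≅ (k,+). Explicitly, a k-Lie automorphism ψ of L̂(𝔤)_S restricts to the identity on L̃(𝔤)_S if and only if there exists a ∈ k such that ψ(x̃ + b·d) = x̃ + ab·c + b·d for all x̃ ∈ L̃(𝔤)_S and b ∈ k. -/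
/-!
If `φ` fixes `L̃(𝔤)_S` pointwise, then `e := φ d - d` centralizes `L(𝔤)_S`, because
`[φ d, x] = φ [d, x] = [d, x]` for every `x ∈ L(𝔤)_S`. This centralizer is `k c`: bracketing with
`x ⊗ s⁰` kills the `c` and `d` components of `e`, so its loop component is central in `𝔤 ⊗ S`,
hence zero since `𝔤` has trivial center; bracketing then with `y ⊗ s` (`y ≠ 0`) leaves
`b (y ⊗ s)` for the `d`-coefficient `b` of `e`, so `b = 0`. Thus `φ d = d + a c`.
-/

section LoopAlgebra

variable {k 𝔤 Lg : Type*} [Field k] [LieRing 𝔤] [LieAlgebra k 𝔤] [LieRing Lg] [LieAlgebra k Lg]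
  {u : ℤ → 𝔤 →ₗ[k] Lg}

lemma loop_injective (hu_ind : ∀ f : ℤ →₀ 𝔤, (f.sum fun i yi => u i yi) = 0 → f = 0) (p : ℤ) :
    Function.Injective (u p) := by
  refine (injective_iff_map_eq_zero (u p)).mpr fun y hy => ?_
  have hsingle := hu_ind (Finsupp.single p y) (by simpa using hy)
  simpa using hsingle

lemma sum_loop_lie_loop_zero
    (hu_bracket : ∀ (p q : ℤ) (y z : 𝔤), ⁅u p y, u q z⁆ = u (p + q) ⁅y, z⁆)
    (f : ℤ →₀ 𝔤) (y : 𝔤) :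
    ⁅f.sum fun i yi => u i yi, u 0 y⁆ = f.sum fun i yi => u i ⁅yi, y⁆ := by
  simp only [Finsupp.sum, sum_lie, hu_bracket, add_zero]

lemma eq_zero_of_lie_loop_zero [LieModule.IsFaithful k 𝔤 𝔤]
    (hu_bracket : ∀ (p q : ℤ) (y z : 𝔤), ⁅u p y, u q z⁆ = u (p + q) ⁅y, z⁆)
    (hu_span : ∀ l : Lg, ∃ f : ℤ →₀ 𝔤, l = f.sum fun i yi => u i yi)
    (hu_ind : ∀ f : ℤ →₀ 𝔤, (f.sum fun i yi => u i yi) = 0 → f = 0)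
    {l : Lg} (hl : ∀ y : 𝔤, ⁅l, u 0 y⁆ = 0) : l = 0 := by
  obtain ⟨f, rfl⟩ := hu_span l
  have hcomm : ∀ i (y : 𝔤), ⁅f i, y⁆ = 0 := fun i y => by
    have hzero := hu_ind (f.mapRange (⁅·, y⁆) (zero_lie y)) <| by
      rw [Finsupp.sum_mapRange_index fun i => map_zero (u i), ← sum_loop_lie_loop_zero hu_bracket,
        hl]
    simpa using DFunLike.congr_fun hzero i
  have hf : f = 0 := Finsupp.ext fun i => by
    have hcenter : f i ∈ LieAlgebra.center k 𝔤 := fun y => by rw [← lie_skew, hcomm, neg_zero]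
    rwa [LieAlgebra.center_eq_bot, LieSubmodule.mem_bot] at hcenter
  simp [hf]

end LoopAlgebra

section AffineAlgebra

variable {k 𝔤 Lg Lhat : Type*} [Field k] [LieRing 𝔤] [LieAlgebra k 𝔤]
  [LieRing Lg] [LieAlgebra k Lg] [LieRing Lhat] [LieAlgebra k Lhat]
  {u : ℤ → 𝔤 →ₗ[k] Lg} {c d : Lhat} {ι : Lg →ₗ[k] Lhat}

lemma lie_loop_zero
    (hu_bracket : ∀ (p q : ℤ) (y z : 𝔤), ⁅u p y, u q z⁆ = u (p + q) ⁅y, z⁆)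
    (hu_span : ∀ l : Lg, ∃ f : ℤ →₀ 𝔤, l = f.sum fun i yi => u i yi)
    (hbr : ∀ (p q : ℤ) (y z : 𝔤),
      ⁅ι (u p y), ι (u q z)⁆ =
        ι (u (p + q) ⁅y, z⁆) +
          (if p + q = 0 then (p : k) * killingForm k 𝔤 y z else 0) • c)
    (l : Lg) (y : 𝔤) : ⁅ι l, ι (u 0 y)⁆ = ι ⁅l, u 0 y⁆ := by
  obtain ⟨f, rfl⟩ := hu_span l
  -- the central term of `hbr p 0` carries the factor `p`, which vanishes when `p + 0 = 0`
  have hterm : ∀ p (x : 𝔤), ⁅ι (u p x), ι (u 0 y)⁆ = ι (u p ⁅x, y⁆) := fun p x => by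
    rw [hbr]; split_ifs <;> simp_all
  rw [sum_loop_lie_loop_zero hu_bracket]
  simp only [Finsupp.sum, map_sum, sum_lie, hterm]

lemma exists_eq_smul_of_lie_loop_eq_zero [Nontrivial 𝔤] [LieModule.IsFaithful k 𝔤 𝔤]
    (hu_bracket : ∀ (p q : ℤ) (y z : 𝔤), ⁅u p y, u q z⁆ = u (p + q) ⁅y, z⁆)
    (hu_span : ∀ l : Lg, ∃ f : ℤ →₀ 𝔤, l = f.sum fun i yi => u i yi)
    (hu_ind : ∀ f : ℤ →₀ 𝔤, (f.sum fun i yi => u i yi) = 0 → f = 0)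
    (hc : ∀ z : Lhat, ⁅c, z⁆ = 0)
    (hd : ∀ (p : ℤ) (y : 𝔤), ⁅d, ι (u p y)⁆ = (p : k) • ι (u p y))
    (hbr : ∀ (p q : ℤ) (y z : 𝔤),
      ⁅ι (u p y), ι (u q z)⁆ =
        ι (u (p + q) ⁅y, z⁆) +
          (if p + q = 0 then (p : k) * killingForm k 𝔤 y z else 0) • c)
    (hdec : ∀ z : Lhat, ∃ (l : Lg) (a b : k), z = ι l + a • c + b • d)
    (huniq : ∀ (l : Lg) (a b : k), ι l + a • c + b • d = 0 → l = 0 ∧ a = 0 ∧ b = 0)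
    {e : Lhat} (he : ∀ (p : ℤ) (y : 𝔤), ⁅e, ι (u p y)⁆ = 0) : ∃ a : k, e = a • c := by
  have hι : Function.Injective ι :=
    (injective_iff_map_eq_zero ι).mpr fun l hl => (huniq l 0 0 (by simp [hl])).1
  obtain ⟨l, a, b, rfl⟩ := hdec e
  have hbracket : ∀ p y,
      ⁅ι l + a • c + b • d, ι (u p y)⁆ = ⁅ι l, ι (u p y)⁆ + (b * p) • ι (u p y) :=
    fun p y => by rw [add_lie, add_lie, smul_lie, smul_lie, hc, hd, smul_zero, add_zero, smul_smul]
  have hl : l = 0 := eq_zero_of_lie_loop_zero hu_bracket hu_span hu_ind fun y => hι <| by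
    simpa [hbracket, lie_loop_zero hu_bracket hu_span hbr] using he 0 y
  obtain ⟨y, hy⟩ := exists_ne (0 : 𝔤)
  have hb : b = 0 := by
    have hbu : b • ι (u 1 y) = 0 := by
      have h1 := he 1 y
      rwa [hbracket, hl, map_zero, zero_lie, zero_add, Int.cast_one, mul_one] at h1
    refine (smul_eq_zero.mp hbu).resolve_right fun h => hy ?_
    exact loop_injective hu_ind 1 (hι (by rw [h, map_zero, map_zero]))
  exact ⟨a, by simp [hl, hb]⟩

end AffineAlgebra

theorem kernel_of_restriction_general
    -- the base field
    (k : Type) [Field k]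
    -- the simple finite-dimensional Lie algebra 𝔤
    (𝔤 : Type) [LieRing 𝔤] [LieAlgebra k 𝔤]
    [LieAlgebra.IsSimple k 𝔤]
    -- the loop algebra L(𝔤)_S = 𝔤 ⊗_k S, S = k[s^{±1}]; `u p y` represents `y ⊗ sᵖ`
    (Lg : Type) [LieRing Lg] [LieAlgebra k Lg]
    (u : ℤ → 𝔤 →ₗ[k] Lg)
    (hu_bracket : ∀ (p q : ℤ) (y z : 𝔤), ⁅u p y, u q z⁆ = u (p + q) ⁅y, z⁆)
    (hu_span : ∀ l : Lg, ∃ f : ℤ →₀ 𝔤, l = f.sum fun i yi => u i yi)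
    (hu_ind : ∀ f : ℤ →₀ 𝔤, (f.sum fun i yi => u i yi) = 0 → f = 0)
    -- the split affine Kac–Moody algebra L̂(𝔤)_S = L(𝔤)_S ⊕ kc ⊕ kd
    (Lhat : Type) [LieRing Lhat] [LieAlgebra k Lhat]
    (c d : Lhat) (ι : Lg →ₗ[k] Lhat)
    (hc : ∀ z : Lhat, ⁅c, z⁆ = 0)
    (hd : ∀ (p : ℤ) (y : 𝔤), ⁅d, ι (u p y)⁆ = (p : k) • ι (u p y))
    (hbr : ∀ (p q : ℤ) (y z : 𝔤),
      ⁅ι (u p y), ι (u q z)⁆ =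
        ι (u (p + q) ⁅y, z⁆) +
          (if p + q = 0 then (p : k) * killingForm k 𝔤 y z else 0) • c)
    (hdec : ∀ z : Lhat, ∃ (l : Lg) (a b : k), z = ι l + a • c + b • d)
    (huniq : ∀ (l : Lg) (a b : k), ι l + a • c + b • d = 0 → l = 0 ∧ a = 0 ∧ b = 0)
    :
    ∀ φ : Lhat ≃ₗ⁅k⁆ Lhat,
      (∀ z ∈ (LinearMap.range ι ⊔ Submodule.span k {c} : Submodule k Lhat),
        φ z = z) ↔
      (∃ a : k,
        ∀ z ∈ (LinearMap.range ι ⊔ Submodule.span k {c} : Submodule k Lhat),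
          ∀ b : k, φ (z + b • d) = z + (a * b) • c + b • d) := by
  intro φ
  constructor
  · intro hfix
    have hfix_loop : ∀ p y, φ (ι (u p y)) = ι (u p y) :=
      fun p y => hfix _ (Submodule.mem_sup_left ⟨u p y, rfl⟩)
    have hcomm : ∀ p y, ⁅φ d - d, ι (u p y)⁆ = 0 := fun p y => by
      rw [sub_lie, ← hfix_loop, ← LieEquiv.map_lie, hd, map_smul, hfix_loop, hd,
        sub_self]
    have := LieAlgebra.IsSimple.nontrivial k 𝔤
    obtain ⟨a, ha⟩ := exists_eq_smul_of_lie_loop_eq_zero hu_bracket hu_span hu_ind hc hd hbr hdec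
      huniq hcomm
    refine ⟨a, fun z hz b => ?_⟩
    rw [map_add, map_smul, hfix z hz, eq_add_of_sub_eq ha]
    module
  · rintro ⟨a, ha⟩ z hz
    simpa using ha z hz 0

/-- The kernel of
`τ : Aut_{k-Lie}(L̂(𝔤)_S) → Aut_{k-Lie}(L̃(𝔤)_S)` is `Hom_k(kd, kc) ≅ (k,+)`:
an automorphism `ψ` of `L̂(𝔤)_S` restricts to the identity on `L̃(𝔤)_S` iff
`ψ(x̃ + b•d) = x̃ + a*b•c + b•d` for some fixed `a ∈ k`. -/
theorem kernel_of_restriction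
    -- the base field
    (k : Type) [Field k] [IsAlgClosed k] [CharZero k]
    -- the simple finite-dimensional Lie algebra 𝔤
    (𝔤 : Type) [LieRing 𝔤] [LieAlgebra k 𝔤] [FiniteDimensional k 𝔤]
    [LieAlgebra.IsSimple k 𝔤]
    -- the loop algebra L(𝔤)_S = 𝔤 ⊗_k S, S = k[s^{±1}]; `u p y` represents `y ⊗ sᵖ`
    (Lg : Type) [LieRing Lg] [LieAlgebra k Lg]
    (u : ℤ → 𝔤 →ₗ[k] Lg)
    (hu_bracket : ∀ (p q : ℤ) (y z : 𝔤), ⁅u p y, u q z⁆ = u (p + q) ⁅y, z⁆)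
    (hu_span : ∀ l : Lg, ∃ f : ℤ →₀ 𝔤, l = f.sum fun i yi => u i yi)
    (hu_ind : ∀ f : ℤ →₀ 𝔤, (f.sum fun i yi => u i yi) = 0 → f = 0)
    -- the split affine Kac–Moody algebra L̂(𝔤)_S = L(𝔤)_S ⊕ kc ⊕ kd
    (Lhat : Type) [LieRing Lhat] [LieAlgebra k Lhat]
    (c d : Lhat) (ι : Lg →ₗ[k] Lhat)
    (hc : ∀ z : Lhat, ⁅c, z⁆ = 0)
    (hd : ∀ (p : ℤ) (y : 𝔤), ⁅d, ι (u p y)⁆ = (p : k) • ι (u p y))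
    (hbr : ∀ (p q : ℤ) (y z : 𝔤),
      ⁅ι (u p y), ι (u q z)⁆ =
        ι (u (p + q) ⁅y, z⁆) +
          (if p + q = 0 then (p : k) * killingForm k 𝔤 y z else 0) • c)
    (hdec : ∀ z : Lhat, ∃ (l : Lg) (a b : k), z = ι l + a • c + b • d)
    (huniq : ∀ (l : Lg) (a b : k), ι l + a • c + b • d = 0 → l = 0 ∧ a = 0 ∧ b = 0)
    :
    ∀ φ : Lhat ≃ₗ⁅k⁆ Lhat,
      (∀ z ∈ (LinearMap.range ι ⊔ Submodule.span k {c} : Submodule k Lhat),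
        φ z = z) ↔
      (∃ a : k,
        ∀ z ∈ (LinearMap.range ι ⊔ Submodule.span k {c} : Submodule k Lhat),
          ∀ b : k, φ (z + b • d) = z + (a * b) • c + b • d) :=
  kernel_of_restriction_general k 𝔤 Lg u hu_bracket hu_span hu_ind Lhat c d ι hc hd hbr hdec huniq
end
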